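/- arXiv:2403.13382 — 11 statements merged into one kernel-verified Lean document; each statement's English description precedes it below -/
import Mathlib

section
/- Let T_0 = ℕⁿ ⊆ ℤⁿ and, for 1 ≤ j ≤ n, let T_j be the submonoid of ℤⁿ generated by the vector (-1,…,-1) together with the standard basis vectors e_k for k ≠ j. Then the family (T_j)_{0 ≤ j ≤ n} is a conic decomposition of ℤⁿ: each T_j is finitely generated, has only the trivial invertible element, generates ℤⁿ as a group, and the union of all T_j equals ℤⁿ. -/
private def nonnegCone (n : ℕ) : AddSubmonoid (Fin n → ℤ) where
  carrier := {v | ∀ k, 0 ≤ v k}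
  zero_mem' := fun _ => le_refl 0
  add_mem' := fun ha hb k => add_nonneg (ha k) (hb k)

private def minCone (n : ℕ) (i : Fin n) : AddSubmonoid (Fin n → ℤ) where
  carrier := {v | v i ≤ 0 ∧ ∀ k, v i ≤ v k}
  zero_mem' := ⟨le_refl 0, fun _ => le_refl 0⟩
  add_mem' := fun ha hb => ⟨add_nonpos ha.1 hb.1, fun k => add_le_add (ha.2 k) (hb.2 k)⟩

/-- The standard conic decomposition of `ℤⁿ`: `T_0 = ℕⁿ` (generated by the standard basis
vectors), and for `1 ≤ j ≤ n`, `T_j` is generated by `(-1,…,-1)` together with the standard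
basis vectors `e_k` for `k ≠ j`. -/
def stdCone (n : ℕ) (j : Fin (n + 1)) : AddSubmonoid (Fin n → ℤ) :=
  if j = 0 then
    AddSubmonoid.closure {v | ∃ k : Fin n, v = Pi.single k 1}
  else
    AddSubmonoid.closure
      ({fun _ => -1} ∪ {v | ∃ k : Fin n, (k : ℕ) + 1 ≠ (j : ℕ) ∧ v = Pi.single k 1})

private lemma mem_stdCone_zero {n : ℕ} (v : Fin n → ℤ) (hv : ∀ k, 0 ≤ v k) :
    v ∈ stdCone n 0 := by
  rw [stdCone, if_pos rfl]
  have h : v = ∑ k, (v k).toNat • Pi.single k (1:ℤ) := by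
    funext l
    simp [Finset.sum_apply, Pi.single_apply, Int.toNat_of_nonneg (hv _)]
  rw [h]
  refine sum_mem fun k _ => nsmul_mem (AddSubmonoid.subset_closure ?_) _
  exact ⟨k, rfl⟩

private lemma mem_stdCone_succ {n : ℕ} (i : Fin n) (v : Fin n → ℤ)
    (h0 : v i ≤ 0) (hmin : ∀ k, v i ≤ v k) :
    v ∈ stdCone n i.succ := by
  rw [stdCone, if_neg (Fin.succ_ne_zero i)]
  have h : v = (-v i).toNat • (fun _ => (-1:ℤ)) + ∑ k, (v k - v i).toNat • Pi.single k (1:ℤ) := by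
    funext l
    have h1 : ((-v i).toNat : ℤ) = -v i := Int.toNat_of_nonneg (by omega)
    have h2 : ∀ k, ((v k - v i).toNat : ℤ) = v k - v i := fun k =>
      Int.toNat_of_nonneg (by have := hmin k; omega)
    simp [Finset.sum_apply, Pi.single_apply, nsmul_eq_mul, h1, h2]
  rw [h]
  have hA : (fun _ => (-1:ℤ)) ∈
      ({fun _ => -1} ∪ {v : Fin n → ℤ | ∃ k : Fin n, (k : ℕ) + 1 ≠ ((i.succ : Fin (n+1)) : ℕ) ∧ v = Pi.single k 1} : Set (Fin n → ℤ)) :=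
    Or.inl rfl
  refine add_mem (nsmul_mem (AddSubmonoid.subset_closure hA) _) (sum_mem fun k _ => ?_)
  by_cases hk : k = i
  · subst hk; simp
  · have hB : Pi.single k (1:ℤ) ∈
        ({fun _ => -1} ∪ {v : Fin n → ℤ | ∃ k : Fin n, (k : ℕ) + 1 ≠ ((i.succ : Fin (n+1)) : ℕ) ∧ v = Pi.single k 1} : Set (Fin n → ℤ)) := by
      refine Or.inr ⟨k, ?_, rfl⟩
      have : (k : ℕ) ≠ (i : ℕ) := fun h => hk (Fin.ext h)
      simp [Fin.val_succ]
      omega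
    exact nsmul_mem (AddSubmonoid.subset_closure hB) _

/-- the family `(T_j)_{0 ≤ j ≤ n}` is a conic decomposition of `ℤⁿ`:
each `T_j` is finitely generated, has only the trivial invertible element, generates `ℤⁿ`
as a group, and the union of all the `T_j` equals `ℤⁿ`. -/
theorem stdCone_is_conic_decomposition (n : ℕ) :
    (∀ j, (stdCone n j).FG) ∧
    (∀ j, ∀ v ∈ stdCone n j, -v ∈ stdCone n j → v = 0) ∧
    (∀ j, AddSubgroup.closure (stdCone n j : Set (Fin n → ℤ)) = ⊤) ∧
    (⋃ j, (stdCone n j : Set (Fin n → ℤ))) = Set.univ := by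
  have hfin : ({v : Fin n → ℤ | ∃ k : Fin n, v = Pi.single k 1}).Finite := by
    apply Set.Finite.subset (Set.finite_range fun k : Fin n => Pi.single k (1:ℤ))
    rintro v ⟨k, rfl⟩; exact ⟨k, rfl⟩
  refine ⟨?_, ?_, ?_, ?_⟩
  · -- FG
    intro j
    rw [stdCone]
    split_ifs with hj
    · exact (AddSubmonoid.fg_iff _).mpr ⟨_, rfl, hfin⟩
    · refine (AddSubmonoid.fg_iff _).mpr ⟨_, rfl, (Set.finite_singleton _).union (hfin.subset ?_)⟩
      rintro v ⟨k, _, rfl⟩; exact ⟨k, rfl⟩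
  · -- pointed
    intro j v hv hv'
    by_cases hj : j = 0
    · subst hj
      have hle : stdCone n 0 ≤ nonnegCone n := by
        rw [stdCone, if_pos rfl]
        refine AddSubmonoid.closure_le.mpr ?_
        rintro w ⟨k, rfl⟩ l
        simp [Pi.single_apply]
        split_ifs <;> omega
      have h1 : ∀ k, 0 ≤ v k := hle hv
      have h2 : ∀ k, 0 ≤ (-v) k := hle hv'
      funext k
      have ha := h1 k
      have hb := h2 k
      simp only [Pi.neg_apply] at hb
      show v k = 0
      omega
    · have hjv : 1 ≤ (j : ℕ) := by
        rcases Nat.eq_zero_or_pos (j : ℕ) with h | h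
        · exact absurd (Fin.ext h) hj
        · exact h
      set i : Fin n := ⟨(j : ℕ) - 1, by omega⟩ with hi
      have hle : stdCone n j ≤ minCone n i := by
        rw [stdCone, if_neg hj]
        refine AddSubmonoid.closure_le.mpr ?_
        rintro w (rfl | ⟨k, hk, rfl⟩)
        · exact ⟨by norm_num, fun _ => le_refl _⟩
        · have hki : k ≠ i := by
            intro h; apply hk; rw [h]; simp [hi]; omega
          constructor
          · simp [Pi.single_apply, hki.symm]
          · intro l
            simp [Pi.single_apply, hki.symm]
            split_ifs <;> omega
      have h1 : v i ≤ 0 ∧ ∀ k, v i ≤ v k := hle hv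
      have h2 : (-v) i ≤ 0 ∧ ∀ k, (-v) i ≤ (-v) k := hle hv'
      simp only [Pi.neg_apply] at h2
      funext k
      have ha := h1.2 k
      have hb := h2.2 k
      have hc := h1.1
      have hd := h2.1
      show v k = 0
      omega
  · -- generates as group
    intro j
    have key : ∀ H : AddSubgroup (Fin n → ℤ),
        (∀ k : Fin n, Pi.single k (1:ℤ) ∈ H) → H = ⊤ := by
      intro H h
      rw [eq_top_iff]
      intro v _
      have hv : v = ∑ k, v k • Pi.single k (1:ℤ) := by
        funext l
        simp [Finset.sum_apply, Pi.single_apply]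
      rw [hv]
      exact AddSubgroup.sum_mem _ fun k _ => AddSubgroup.zsmul_mem _ (h k) _
    apply key
    intro k
    by_cases hj : j = 0
    · subst hj
      apply AddSubgroup.subset_closure
      rw [SetLike.mem_coe, stdCone, if_pos rfl]
      exact AddSubmonoid.subset_closure ⟨k, rfl⟩
    · have hjv : 1 ≤ (j : ℕ) := by
        rcases Nat.eq_zero_or_pos (j : ℕ) with h | h
        · exact absurd (Fin.ext h) hj
        · exact h
      set i : Fin n := ⟨(j : ℕ) - 1, by omega⟩ with hi
      have hgen : ∀ w ∈ ({fun _ => -1} ∪ {v : Fin n → ℤ | ∃ k : Fin n, (k : ℕ) + 1 ≠ (j : ℕ) ∧ v = Pi.single k 1} : Set (Fin n → ℤ)),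
          w ∈ AddSubgroup.closure (stdCone n j : Set (Fin n → ℤ)) := by
        intro w hw
        apply AddSubgroup.subset_closure
        rw [SetLike.mem_coe, stdCone, if_neg hj]
        exact AddSubmonoid.subset_closure hw
      by_cases hk : k = i
      · subst hk
        have heq : Pi.single i (1:ℤ) =
            -((fun _ => (-1:ℤ)) + ∑ l ∈ Finset.univ.erase i, Pi.single l (1:ℤ)) := by
          funext m
          by_cases hm : m = i
          · subst hm
            simp [Finset.sum_apply, Pi.single_apply]
          · simp [Finset.sum_apply, Pi.single_apply, hm,
              Finset.sum_ite_eq' (Finset.univ.erase i) m (fun _ => (1:ℤ))]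
        rw [heq]
        refine neg_mem (add_mem (hgen _ (Or.inl rfl)) (AddSubgroup.sum_mem _ fun l hl => ?_))
        refine hgen _ (Or.inr ⟨l, ?_, rfl⟩)
        have : l ≠ i := (Finset.mem_erase.mp hl).1
        have : (l : ℕ) ≠ (i : ℕ) := fun h => this (Fin.ext h)
        simp [hi] at this ⊢; omega
      · refine hgen _ (Or.inr ⟨k, ?_, rfl⟩)
        have : (k : ℕ) ≠ (i : ℕ) := fun h => hk (Fin.ext h)
        simp [hi] at this ⊢; omega
  · -- union
    rw [Set.eq_univ_iff_forall]
    intro v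
    rw [Set.mem_iUnion]
    by_cases hv : ∀ k, 0 ≤ v k
    · exact ⟨0, mem_stdCone_zero v hv⟩
    · push_neg at hv
      obtain ⟨k0, hk0⟩ := hv
      obtain ⟨i, -, hi⟩ := Finset.exists_min_image Finset.univ v ⟨k0, Finset.mem_univ k0⟩
      refine ⟨i.succ, mem_stdCone_succ i v ?_ (fun k => hi k (Finset.mem_univ k))⟩
      have := hi k0 (Finset.mem_univ k0)
      omega
end

section
/- The function φ : ℤⁿ → ℚ_{≥0} defined by φ(i_1,…,i_n) = i_1 + ⋯ + i_n − (n+1)·min(0, i_1, …, i_n) satisfies: φ(t) > 0 for all t ≠ 0, φ(s+t) ≤ φ(s) + φ(t) for all s,t ∈ ℤⁿ, and φ restricts to a monoid homomorphism on each cone T_j of the standard conic decomposition (where T_0 = ℕⁿ and T_j for j ≥ 1 is generated by −(e_1+⋯+e_n) and the e_k, k ≠ j). -/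
/-- `min(0, i_1, …, i_n)` for a vector `(i_1,…,i_n) ∈ ℤⁿ`. -/
def minCoord {n : ℕ} (v : Fin n → ℤ) : ℤ := Finset.fold min 0 v Finset.univ

/-- The score function `φ(i_1,…,i_n) = i_1 + ⋯ + i_n − (n+1)·min(0, i_1, …, i_n)`,
valued in `ℚ_{≥0}`. -/
def phiDegmin (n : ℕ) (v : Fin n → ℤ) : ℚ :=
  ((∑ k, v k : ℤ) : ℚ) - (n + 1) * (minCoord v : ℚ)

lemma minCoord_le_zero {n : ℕ} (v : Fin n → ℤ) : minCoord v ≤ 0 :=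
  (Finset.fold_min_le 0).2 (Or.inl le_rfl)

lemma minCoord_le {n : ℕ} (v : Fin n → ℤ) (k : Fin n) : minCoord v ≤ v k :=
  (Finset.fold_min_le (v k)).2 (Or.inr ⟨k, Finset.mem_univ k, le_rfl⟩)

lemma le_minCoord {n : ℕ} {v : Fin n → ℤ} {c : ℤ} (h0 : c ≤ 0) (h : ∀ k, c ≤ v k) :
    c ≤ minCoord v :=
  (Finset.le_fold_min c).2 ⟨h0, fun k _ => h k⟩

lemma minCoord_eq_zero {n : ℕ} {v : Fin n → ℤ} (h : ∀ k, 0 ≤ v k) : minCoord v = 0 :=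
  le_antisymm (minCoord_le_zero v) (le_minCoord le_rfl h)

lemma minCoord_eq {n : ℕ} {v : Fin n → ℤ} {i : Fin n} (h0 : v i ≤ 0)
    (h : ∀ k, v i ≤ v k) : minCoord v = v i :=
  le_antisymm (minCoord_le v i) (le_minCoord h0 h)

lemma phiDegmin_eq (n : ℕ) (v : Fin n → ℤ) :
    phiDegmin n v = (((∑ k, v k) - (n + 1) * minCoord v : ℤ) : ℚ) := by
  unfold phiDegmin; push_cast; ring

/-- membership in `stdCone n 0` gives nonnegativity of coordinates. -/
lemma stdCone_zero_nonneg {n : ℕ} {v : Fin n → ℤ} (hv : v ∈ stdCone n 0) :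
    ∀ k, 0 ≤ v k := by
  rw [stdCone, if_pos rfl] at hv
  induction hv using AddSubmonoid.closure_induction with
  | mem x hx =>
    obtain ⟨k, rfl⟩ := hx
    intro k'
    rcases eq_or_ne k k' with rfl | h
    · simp
    · simp [Pi.single_eq_of_ne' h]
  | zero => simp
  | add x y _ _ hx hy => intro k; exact add_nonneg (hx k) (hy k)

/-- membership in `stdCone n j`, `j ≠ 0`: the `(j-1)`-th coordinate is nonpositive and minimal. -/
lemma stdCone_ne_zero_min {n : ℕ} {j : Fin (n + 1)} (hj : j ≠ 0) {i : Fin n}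
    (hi : (i : ℕ) + 1 = (j : ℕ)) {v : Fin n → ℤ} (hv : v ∈ stdCone n j) :
    v i ≤ 0 ∧ ∀ k, v i ≤ v k := by
  rw [stdCone, if_neg hj] at hv
  induction hv using AddSubmonoid.closure_induction with
  | mem x hx =>
    rcases hx with hx | ⟨k, hk, rfl⟩
    · rw [Set.mem_singleton_iff] at hx
      subst hx
      exact ⟨by norm_num, fun _ => le_rfl⟩
    · have hki : k ≠ i := by rintro rfl; exact hk hi
      have hvi : (Pi.single k 1 : Fin n → ℤ) i = 0 := Pi.single_eq_of_ne hki.symm 1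
      refine ⟨le_of_eq hvi, fun k' => ?_⟩
      rw [hvi]
      rcases eq_or_ne k k' with rfl | h
      · simp
      · simp [Pi.single_eq_of_ne' h]
  | zero => exact ⟨le_rfl, fun _ => le_rfl⟩
  | add x y _ _ hx hy =>
    exact ⟨add_nonpos hx.1 hy.1, fun k => add_le_add (hx.2 k) (hy.2 k)⟩

/-- `φ(i_1,…,i_n) = i_1 + ⋯ + i_n − (n+1)·min(0, i_1, …, i_n)` is nonnegative,
positive away from `0`, subadditive, and restricts to a monoid homomorphism on each cone of
the standard conic decomposition. -/
theorem phiDegmin_properties (n : ℕ) :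
    (∀ v : Fin n → ℤ, 0 ≤ phiDegmin n v) ∧
    (∀ v : Fin n → ℤ, v ≠ 0 → 0 < phiDegmin n v) ∧
    (∀ s t : Fin n → ℤ, phiDegmin n (s + t) ≤ phiDegmin n s + phiDegmin n t) ∧
    (phiDegmin n 0 = 0 ∧ ∀ j, ∀ s ∈ stdCone n j, ∀ t ∈ stdCone n j,
      phiDegmin n (s + t) = phiDegmin n s + phiDegmin n t) := by
  have hsum : ∀ v : Fin n → ℤ, (n : ℤ) * minCoord v ≤ ∑ k, v k := by
    intro v
    calc (n : ℤ) * minCoord v = ∑ _k : Fin n, minCoord v := by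
          simp [Finset.sum_const, mul_comm]
      _ ≤ ∑ k, v k := Finset.sum_le_sum fun k _ => minCoord_le v k
  have hnn : ∀ v : Fin n → ℤ, -(minCoord v) ≤ (∑ k, v k) - (n + 1) * minCoord v := by
    intro v
    have := hsum v
    nlinarith [minCoord_le_zero v]
  refine ⟨?_, ?_, ?_, ?_, ?_⟩
  · intro v
    rw [phiDegmin_eq]
    have := hnn v
    have h0 := minCoord_le_zero v
    have key : (0:ℤ) ≤ (∑ k, v k) - ((n:ℤ) + 1) * minCoord v := by linarith
    exact_mod_cast key
  · intro v hv
    rw [phiDegmin_eq]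
    have h0 := minCoord_le_zero v
    rcases lt_or_eq_of_le h0 with hlt | heq
    · have := hnn v
      have key : (0:ℤ) < (∑ k, v k) - ((n:ℤ) + 1) * minCoord v := by linarith
      exact_mod_cast key
    · have hpos : ∀ k, 0 ≤ v k := fun k => heq ▸ minCoord_le v k
      have : ∃ k, 0 < v k := by
        by_contra h
        push_neg at h
        exact hv (funext fun k => le_antisymm (h k) (hpos k))
      obtain ⟨k, hk⟩ := this
      have hsumpos : 0 < ∑ k, v k :=
        Finset.sum_pos' (fun k _ => hpos k) ⟨k, Finset.mem_univ k, hk⟩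
      have key : (0:ℤ) < (∑ k, v k) - ((n:ℤ) + 1) * minCoord v := by
        rw [heq]; linarith
      exact_mod_cast key
  · intro s t
    simp only [phiDegmin_eq]
    have hmin : minCoord s + minCoord t ≤ minCoord (s + t) :=
      le_minCoord (add_nonpos (minCoord_le_zero s) (minCoord_le_zero t))
        (fun k => add_le_add (minCoord_le s k) (minCoord_le t k))
    have hc : ((n : ℤ) + 1) ≥ 0 := by positivity
    rw [← Int.cast_add]
    have : (∑ k, (s + t) k) - (n + 1) * minCoord (s + t) ≤
        ((∑ k, s k) - (n + 1) * minCoord s) + ((∑ k, t k) - (n + 1) * minCoord t) := by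
      have hs : (∑ k, (s + t) k) = (∑ k, s k) + ∑ k, t k := by
        simp [Finset.sum_add_distrib]
      nlinarith
    exact_mod_cast this
  · rw [phiDegmin_eq]
    norm_num [minCoord_eq_zero (v := (0 : Fin n → ℤ)) (fun k => le_rfl)]
  · intro j s hs t ht
    simp only [phiDegmin_eq]
    have hsum' : (∑ k, (s + t) k) = (∑ k, s k) + ∑ k, t k := by
      simp [Finset.sum_add_distrib]
    rcases eq_or_ne j 0 with rfl | hj
    · have h1 := minCoord_eq_zero (stdCone_zero_nonneg hs)
      have h2 := minCoord_eq_zero (stdCone_zero_nonneg ht)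
      have h3 : minCoord (s + t) = 0 :=
        minCoord_eq_zero fun k => add_nonneg (stdCone_zero_nonneg hs k)
          (stdCone_zero_nonneg ht k)
      rw [← Int.cast_add]
      congr 1
      rw [h1, h2, h3, hsum']
      ring
    · have hjn : (j : ℕ) ≠ 0 := fun h => hj (Fin.ext h)
      have hjlt : (j : ℕ) < n + 1 := j.isLt
      have hin : (j : ℕ) - 1 < n := by omega
      set i : Fin n := ⟨(j : ℕ) - 1, hin⟩ with hidef
      have hi : (i : ℕ) + 1 = (j : ℕ) := by simp [hidef]; omega
      obtain ⟨hs1, hs2⟩ := stdCone_ne_zero_min hj hi hs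
      obtain ⟨ht1, ht2⟩ := stdCone_ne_zero_min hj hi ht
      have h1 := minCoord_eq hs1 hs2
      have h2 := minCoord_eq ht1 ht2
      have h3 : minCoord (s + t) = s i + t i :=
        minCoord_eq (v := s + t) (add_nonpos hs1 ht1)
          (fun k => add_le_add (hs2 k) (ht2 k))
      rw [← Int.cast_add]
      congr 1
      rw [h1, h2, h3, hsum']
      ring
end

section
/- Let ≤ be a generalized monomial order on ℤⁿ for a conic decomposition (T_i)_{i∈I}. Then every strictly descending sequence in ℤⁿ with respect to ≤ is finite; equivalently, every nonempty subset of ℤⁿ has a least element for ≤. -/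
/-- if `<` is a generalized monomial order on `ℤⁿ` for a conic decomposition
`(T_i)_{i∈I}`, then every strictly descending sequence in `ℤⁿ` is finite; equivalently,
every nonempty subset of `ℤⁿ` has a least element. -/
theorem gmo_is_well_order
    (n : ℕ) (I : Type) [Finite I] (T : I → AddSubmonoid (Fin n → ℤ))
    (hFG : ∀ i, (T i).FG)
    (hunit : ∀ i, ∀ v ∈ T i, -v ∈ T i → v = 0)
    (hgen : ∀ i, AddSubgroup.closure (T i : Set (Fin n → ℤ)) = ⊤)
    (hcover : ∀ v : Fin n → ℤ, ∃ i, v ∈ T i)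
    (lt : (Fin n → ℤ) → (Fin n → ℤ) → Prop)
    (hlt : IsStrictTotalOrder (Fin n → ℤ) lt)
    (hzero : ∀ v : Fin n → ℤ, v = 0 ∨ lt 0 v)
    (hcompat : ∀ r : Fin n → ℤ, ∀ i, ∀ s ∈ T i, ∀ t ∈ T i, lt r s → lt (r + t) (s + t)) :
    (¬ ∃ a : ℕ → (Fin n → ℤ), ∀ k, lt (a (k + 1)) (a k)) ∧
    (∀ S : Set (Fin n → ℤ), S.Nonempty → ∃ m ∈ S, ∀ x ∈ S, ¬ lt x m) := by
  classical
  haveI := hlt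
  have htrans : ∀ {x y z}, lt x y → lt y z → lt x z := fun h1 h2 => _root_.trans h1 h2
  have hirr : ∀ x, ¬ lt x x := fun x => irrefl x
  have key : ¬ ∃ a : ℕ → (Fin n → ℤ), ∀ k, lt (a (k + 1)) (a k) := by
    rintro ⟨a, ha⟩
    -- strict descent along the whole chain
    have hchain : ∀ k j : ℕ, j < k → lt (a k) (a j) := by
      intro k
      induction k with
      | zero => intro j h; omega
      | succ k ih =>
        intro j hjk
        rcases Nat.lt_succ_iff_lt_or_eq.mp hjk with h | h
        · exact htrans (ha k) (ih j h)
        · subst h; exact ha j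
    -- infinitely many terms lie in a single `T i`
    choose g hg using fun k => hcover (a k)
    obtain ⟨i, hi⟩ := Finite.exists_infinite_fiber g
    have hinf : (setOf (fun k => g k = i)).Infinite := by
      have hpre : g ⁻¹' {i} = setOf (fun k => g k = i) := by ext k; simp; exact Iff.rfl
      rw [← hpre, ← Set.infinite_coe_iff]
      exact hi
    set e := Nat.nth (fun k => g k = i) with he_def
    have he : StrictMono e := Nat.nth_strictMono hinf
    have hbmem : ∀ k, a (e k) ∈ T i := by
      intro k
      have h1 : g (e k) = i := Nat.nth_mem_of_infinite hinf k
      have := hg (e k)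
      rwa [h1] at this
    -- generators of `T i`
    obtain ⟨s, hs⟩ := hFG i
    have hsub : (s : Set (Fin n → ℤ)) ⊆ T i := by
      rw [← hs]; exact AddSubmonoid.subset_closure
    -- the monoid map from exponent vectors
    set φ : (↥s → ℕ) → (Fin n → ℤ) := fun c => ∑ x : ↥s, c x • (x : Fin n → ℤ) with hφ_def
    have hφ_mem : ∀ c, φ c ∈ T i := by
      intro c
      exact AddSubmonoid.sum_mem _ fun x _ =>
        AddSubmonoid.nsmul_mem _ (hsub x.2) _
    have hφ_add : ∀ c d, φ (c + d) = φ c + φ d := by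
      intro c d
      simp only [hφ_def, Pi.add_apply, add_smul, Finset.sum_add_distrib]
    -- surjectivity onto `T i`
    have hφ_surj : ∀ v ∈ T i, ∃ c, φ c = v := by
      intro v hv
      rw [← hs] at hv
      induction hv using AddSubmonoid.closure_induction with
      | mem x hx =>
        refine ⟨Pi.single ⟨x, hx⟩ 1, ?_⟩
        simp only [hφ_def]
        rw [Finset.sum_eq_single (⟨x, hx⟩ : ↥s)]
        · simp
        · intro b _ hb
          simp [Pi.single_apply, hb]
        · simp
      | zero => exact ⟨0, by simp only [hφ_def, Pi.zero_apply, zero_smul, Finset.sum_const_zero]⟩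
      | add x y _ _ ihx ihy =>
        obtain ⟨c, rfl⟩ := ihx
        obtain ⟨d, rfl⟩ := ihy
        exact ⟨c + d, hφ_add c d⟩
    choose c hc using fun k => hφ_surj (a (e k)) (hbmem k)
    -- Dickson's lemma
    have hPWO : (Set.univ : Set (↥s → ℕ)).IsPWO :=
      Set.isPWO_univ_iff.2 inferInstance
    obtain ⟨p, q, hpq, hle⟩ := hPWO.exists_lt (f := c) (fun _ => Set.mem_univ _)
    have hsplit : c p + (c q - c p) = c q := by
      funext x
      have h1 : c p x ≤ c q x := hle x
      simp only [Pi.add_apply, Pi.sub_apply]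
      omega
    have hadd : a (e q) = a (e p) + φ (c q - c p) := by
      rw [← hc p, ← hc q, ← hφ_add, hsplit]
    have hdesc : lt (a (e q)) (a (e p)) := hchain _ _ (he hpq)
    set u := φ (c q - c p) with hu_def
    rcases hzero u with h0 | h0
    · rw [h0, add_zero] at hadd
      rw [hadd] at hdesc
      exact hirr _ hdesc
    · have := hcompat 0 i u (hφ_mem _) (a (e p)) (hbmem p) h0
      rw [zero_add, add_comm u, ← hadd] at this
      exact hirr _ (htrans hdesc this)
  refine ⟨key, ?_⟩
  have hwf : WellFounded lt := by
    rw [RelEmbedding.wellFounded_iff_isEmpty]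
    constructor
    intro f
    exact key ⟨f, fun k => f.map_rel_iff.2 (Nat.lt_succ_self k)⟩
  intro S hS
  exact hwf.has_min S hS
end

section
/- Fix a generalized monomial order on ℤⁿ for a conic decomposition (T_i)_{i∈I}, and let f be a nonzero Laurent polynomial over a field K. If i ∈ I and u, v ∈ ℤⁿ both satisfy lm(u·f) ∈ T_i and lm(v·f) ∈ T_i (where u·f denotes multiplication of f by the monomial X^u and lm denotes the largest exponent in the support), then the monomials t_u, t_v of f with lm(X^u f) = X^u t_u and lm(X^v f) = X^v t_v are equal. -/
/-- `LMof lt t f m` says that `m` is the leading monomial of `X^t · f` for the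
(generalized monomial) order `lt`: `m` belongs to the support `t + supp f` of `X^t f`
and dominates every other element of that support. -/
def LMof {n : ℕ} {K : Type} [Zero K] (lt : (Fin n → ℤ) → (Fin n → ℤ) → Prop)
    (t : Fin n → ℤ) (f : (Fin n → ℤ) →₀ K) (m : Fin n → ℤ) : Prop :=
  (∃ s ∈ f.support, m = t + s) ∧ ∀ s ∈ f.support, t + s ≠ m → lt (t + s) m

/-- fix a generalized monomial order on `ℤⁿ` for a conic decomposition
`(T_i)` and a nonzero Laurent polynomial `f` over a field `K`. If `u, v ∈ ℤⁿ` are such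
that `lm(X^u f) ∈ T_i` and `lm(X^v f) ∈ T_i`, then the monomials `t_u, t_v` of `f` with
`lm(X^u f) = X^u t_u` and `lm(X^v f) = X^v t_v` are equal. -/
theorem cone_leading_monomial_independent
    (n : ℕ) (K : Type) [Field K]
    (I : Type) [Finite I] (T : I → AddSubmonoid (Fin n → ℤ))
    (hFG : ∀ i, (T i).FG)
    (hunit : ∀ i, ∀ v ∈ T i, -v ∈ T i → v = 0)
    (hgen : ∀ i, AddSubgroup.closure (T i : Set (Fin n → ℤ)) = ⊤)
    (hcover : ∀ v : Fin n → ℤ, ∃ i, v ∈ T i)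
    (lt : (Fin n → ℤ) → (Fin n → ℤ) → Prop)
    (hlt : IsStrictTotalOrder (Fin n → ℤ) lt)
    (hzero : ∀ v : Fin n → ℤ, v = 0 ∨ lt 0 v)
    (hcompat : ∀ r : Fin n → ℤ, ∀ i, ∀ s ∈ T i, ∀ t ∈ T i, lt r s → lt (r + t) (s + t))
    (f : (Fin n → ℤ) →₀ K) (hf : f ≠ 0)
    (i : I) (u v tu tv : Fin n → ℤ)
    (htu : tu ∈ f.support) (htv : tv ∈ f.support)
    (hlmu : LMof lt u f (u + tu)) (hTu : u + tu ∈ T i)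
    (hlmv : LMof lt v f (v + tv)) (hTv : v + tv ∈ T i) :
    tu = tv := by
  by_contra hne
  -- write tu - tv = p - q with p, q ∈ T i
  have hmem : tu - tv ∈ AddSubgroup.closure (T i : Set (Fin n → ℤ)) := by
    rw [hgen]; trivial
  have hdiff : ∃ p ∈ T i, ∃ q ∈ T i, tu - tv = p - q := by
    refine AddSubgroup.closure_induction ?_ ?_ ?_ ?_ hmem
    · intro x hx; exact ⟨x, hx, 0, (T i).zero_mem, by simp⟩
    · exact ⟨0, (T i).zero_mem, 0, (T i).zero_mem, by simp⟩
    · rintro x y _ _ ⟨p, hp, q, hq, rfl⟩ ⟨p', hp', q', hq', rfl⟩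
      exact ⟨p + p', add_mem hp hp', q + q', add_mem hq hq', by abel⟩
    · rintro x _ ⟨p, hp, q, hq, rfl⟩
      exact ⟨q, hq, p, hp, by abel⟩
  obtain ⟨p, hp, q, hq, hd⟩ := hdiff
  have hkey : tu + q = tv + p := by
    have h := sub_eq_sub_iff_add_eq_add.mp hd
    rw [h]; exact add_comm p tv
  have h1 : lt (u + tv) (u + tu) := by
    refine hlmu.2 tv htv fun h => hne ?_
    exact (add_left_cancel h).symm
  have h2 : lt (v + tu) (v + tv) := by
    refine hlmv.2 tu htu fun h => hne ?_
    exact add_left_cancel h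
  -- shift h1 by p, h2 by q
  have h1' : lt (u + tu + q) (u + tu + p) := by
    have := hcompat (u + tv) i (u + tu) hTu p hp h1
    have e : u + tv + p = u + tu + q := by
      rw [add_assoc, add_assoc, hkey]
    rwa [e] at this
  have h2' : lt (v + tv + p) (v + tv + q) := by
    have := hcompat (v + tu) i (v + tv) hTv q hq h2
    have e : v + tu + q = v + tv + p := by
      rw [add_assoc, add_assoc, hkey]
    rwa [e] at this
  have h3 : lt (u + tu + q + (v + tv)) (u + tu + p + (v + tv)) :=
    hcompat _ i _ (add_mem hTu hp) _ hTv h1'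
  have h4 : lt (v + tv + p + (u + tu)) (v + tv + q + (u + tu)) :=
    hcompat _ i _ (add_mem hTv hq) _ hTu h2'
  have e1 : v + tv + p + (u + tu) = u + tu + p + (v + tv) := by abel
  have e2 : v + tv + q + (u + tu) = u + tu + q + (v + tv) := by abel
  rw [e1, e2] at h4
  exact hlt.irrefl _ (hlt.trans _ _ _ h3 h4)
end

section
/- Fix a generalized monomial order on ℤⁿ for a conic decomposition (T_i)_{i∈I} and a nonzero Laurent polynomial f over a field K. For each i ∈ I, the set T_i(f) = {t ∈ ℤⁿ : lm(X^t f) ∈ T_i} is nonempty: there exists t ∈ ℤⁿ with supp(X^t f) ⊆ T_i, and any such t lies in T_i(f). -/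
/-- In a strict total order, every nonempty finset has a maximum. -/
lemma exists_finset_max {α : Type*} (lt : α → α → Prop) (h : IsStrictTotalOrder α lt)
    (S : Finset α) (hS : S.Nonempty) : ∃ m ∈ S, ∀ x ∈ S, x ≠ m → lt x m := by
  classical
  induction hS using Finset.Nonempty.cons_induction with
  | singleton a => exact ⟨a, by simp, by simp⟩
  | cons a S ha hS ih =>
    obtain ⟨m, hm, hmax⟩ := ih
    rcases (show lt a m ∨ a = m ∨ lt m a by
      by_cases h1 : lt a m
      · exact Or.inl h1
      by_cases h2 : lt m a
      · exact Or.inr (Or.inr h2)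
      exact Or.inr (Or.inl (h.trichotomous a m h1 h2))) with hlt' | heq | hgt
    · refine ⟨m, Finset.mem_cons_of_mem hm, ?_⟩
      intro x hx hxm
      rcases Finset.mem_cons.mp hx with rfl | hx
      · exact hlt'
      · exact hmax x hx hxm
    · exact absurd heq.symm (by rintro rfl; exact ha hm)
    · refine ⟨a, Finset.mem_cons_self a S, ?_⟩
      intro x hx hxa
      rcases Finset.mem_cons.mp hx with rfl | hx
      · exact absurd rfl hxa
      · by_cases hxm : x = m
        · exact hxm ▸ hgt
        · exact h.trans _ _ _ (hmax x hx hxm) hgt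

/-- Every element of the group closure of an additive submonoid is a difference. -/
lemma mem_closure_diff {G : Type*} [AddCommGroup G] (T : AddSubmonoid G) (v : G)
    (hv : v ∈ AddSubgroup.closure (T : Set G)) : ∃ p ∈ T, ∃ q ∈ T, v = p - q := by
  induction hv using AddSubgroup.closure_induction with
  | mem x hx => exact ⟨x, hx, 0, T.zero_mem, by simp⟩
  | zero => exact ⟨0, T.zero_mem, 0, T.zero_mem, by simp⟩
  | add x y _ _ hx hy =>
    obtain ⟨p, hp, q, hq, rfl⟩ := hx
    obtain ⟨p', hp', q', hq', rfl⟩ := hy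
    exact ⟨p + p', T.add_mem hp hp', q + q', T.add_mem hq hq', by abel⟩
  | neg x _ hx =>
    obtain ⟨p, hp, q, hq, rfl⟩ := hx
    exact ⟨q, hq, p, hp, by abel⟩

/-- fix a generalized monomial order for a conic decomposition `(T_i)` and a
nonzero Laurent polynomial `f` over a field `K`. For each `i`, the set
`T_i(f) = {t : lm(X^t f) ∈ T_i}` is nonempty: there exists `t` with `supp(X^t f) ⊆ T_i`,
and any such `t` lies in `T_i(f)`. -/
theorem cone_lead_set_nonempty
    (n : ℕ) (K : Type) [Field K]
    (I : Type) [Finite I] (T : I → AddSubmonoid (Fin n → ℤ))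
    (hFG : ∀ i, (T i).FG)
    (hunit : ∀ i, ∀ v ∈ T i, -v ∈ T i → v = 0)
    (hgen : ∀ i, AddSubgroup.closure (T i : Set (Fin n → ℤ)) = ⊤)
    (hcover : ∀ v : Fin n → ℤ, ∃ i, v ∈ T i)
    (lt : (Fin n → ℤ) → (Fin n → ℤ) → Prop)
    (hlt : IsStrictTotalOrder (Fin n → ℤ) lt)
    (hzero : ∀ v : Fin n → ℤ, v = 0 ∨ lt 0 v)
    (hcompat : ∀ r : Fin n → ℤ, ∀ i, ∀ s ∈ T i, ∀ t ∈ T i, lt r s → lt (r + t) (s + t))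
    (f : (Fin n → ℤ) →₀ K) (hf : f ≠ 0) (i : I) :
    (∃ t : Fin n → ℤ, ∀ s ∈ f.support, t + s ∈ T i) ∧
    (∀ t : Fin n → ℤ, (∀ s ∈ f.support, t + s ∈ T i) →
      ∃ m, LMof lt t f m ∧ m ∈ T i) := by
  classical
  constructor
  · -- existence of t
    have hdiff : ∀ s : Fin n → ℤ, ∃ p ∈ T i, ∃ q ∈ T i, -s = p - q := fun s =>
      mem_closure_diff (T i) (-s) (by rw [hgen i]; trivial)
    choose p hp q hq hpq using hdiff
    refine ⟨∑ s ∈ f.support, p s, fun s' hs' => ?_⟩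
    have h1 : q s' = p s' + s' := by
      have h := hpq s'
      linear_combination h
    have h2 : (∑ s ∈ f.support, p s) + s' = q s' + ∑ s ∈ f.support.erase s', p s := by
      rw [← Finset.add_sum_erase _ p hs', h1]; abel
    rw [h2]
    exact (T i).add_mem (hq s') ((T i).sum_mem fun s hs => hp s)
  · intro t ht
    have hsupp : f.support.Nonempty := Finsupp.support_nonempty_iff.mpr hf
    have himg : (f.support.image (fun s => t + s)).Nonempty := hsupp.image _
    obtain ⟨m, hm, hmax⟩ := exists_finset_max lt hlt _ himg
    obtain ⟨s₀, hs₀, rfl⟩ := Finset.mem_image.mp hm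
    refine ⟨t + s₀, ⟨⟨s₀, hs₀, rfl⟩, fun s hs hne => ?_⟩, ht s₀ hs₀⟩
    exact hmax (t + s) (Finset.mem_image_of_mem _ hs) hne
end

section
/- Let K be a field complete for a discrete valuation, r ∈ ℚⁿ, and ≤_r the preorder on nonzero terms aX^u defined by: aX^u ≤_r bX^v iff val_r(aX^u) > val_r(bX^v), or val_r(aX^u) = val_r(bX^v) and X^u ≤_ω X^v for a fixed generalized monomial order ≤_ω. Then for any sequence of terms (t_j) strictly decreasing for ≤_r, val_r(t_j) → +∞ as j → ∞. -/
open Filter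

/-- The real number `r · u` for `r ∈ ℚⁿ` and `u ∈ ℤⁿ`. -/
noncomputable def rdot {n : ℕ} (r : Fin n → ℚ) (u : Fin n → ℤ) : ℝ :=
  ∑ k, (r k : ℝ) * (u k : ℝ)

/-- The strict term preorder `<_r` on terms `aX^u` (represented as pairs `(a, u)`):
`aX^u <_r bX^v` iff `val_r(aX^u) > val_r(bX^v)`, or the `val_r`'s are equal, the
monomials differ, and `X^u <_ω X^v`; here `val_r(aX^u) = val(a) − r·u`. -/
def TermLt {n : ℕ} {K : Type} (val : K → ℝ) (r : Fin n → ℚ)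
    (lt : (Fin n → ℤ) → (Fin n → ℤ) → Prop)
    (p q : K × (Fin n → ℤ)) : Prop :=
  (val q.1 - rdot r q.2 < val p.1 - rdot r p.2) ∨
  (val p.1 - rdot r p.2 = val q.1 - rdot r q.2 ∧ p.2 ≠ q.2 ∧ lt p.2 q.2)

/-- A generalized monomial order admits no infinite strictly decreasing sequence. -/
lemma no_infinite_descent {n : ℕ} {I : Type} [Finite I]
    (T : I → AddSubmonoid (Fin n → ℤ))
    (hFG : ∀ i, (T i).FG)
    (hcover : ∀ v : Fin n → ℤ, ∃ i, v ∈ T i)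
    (lt : (Fin n → ℤ) → (Fin n → ℤ) → Prop)
    (hlt : IsStrictTotalOrder (Fin n → ℤ) lt)
    (hzero : ∀ v : Fin n → ℤ, v = 0 ∨ lt 0 v)
    (hcompat : ∀ ρ : Fin n → ℤ, ∀ i, ∀ s ∈ T i, ∀ t ∈ T i, lt ρ s → lt (ρ + t) (s + t))
    (v : ℕ → (Fin n → ℤ)) (hv : ∀ k, lt (v (k + 1)) (v k)) : False := by
  classical
  have htrans := hlt.toIsStrictOrder.toIsTrans.trans
  have hirr := hlt.toIsStrictOrder.toIrrefl.irrefl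
  have chain : ∀ a k, lt (v (a + (k + 1))) (v a) := by
    intro a k
    induction k with
    | zero => exact hv a
    | succ k ih => exact htrans _ _ _ (hv (a + (k + 1))) ih
  have hlt' : ∀ a b, a < b → lt (v b) (v a) := by
    intro a b h
    obtain ⟨k, rfl⟩ : ∃ k, b = a + (k + 1) := ⟨b - a - 1, by omega⟩
    exact chain a k
  -- choose for each index a monoid containing the value
  have hι : ∀ j, v j ∈ T ((hcover (v j)).choose) := fun j => (hcover (v j)).choose_spec
  set ι : ℕ → I := fun j => (hcover (v j)).choose with hιdef
  obtain ⟨i, hfib⟩ := Finite.exists_infinite_fiber ι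
  have hinf0 : (ι ⁻¹' {i}).Infinite := by rwa [Set.infinite_coe_iff] at hfib
  have hinf : (setOf (fun j => ι j = i)).Infinite := hinf0
  set g : ℕ → ℕ := Nat.nth (fun j => ι j = i) with hgdef
  have hg : StrictMono g := Nat.nth_strictMono hinf
  have hmem : ∀ k, v (g k) ∈ T i := by
    intro k
    have hp : ι (g k) = i := Nat.nth_mem_of_infinite hinf k
    rw [← hp]; exact hι (g k)
  obtain ⟨G, hG⟩ := hFG i
  have hGT : ∀ g' ∈ G, g' ∈ T i := fun g' hg' => hG ▸ AddSubmonoid.subset_closure hg'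
  -- coefficient vectors
  have hcoef : ∀ x ∈ T i, ∃ c : (Fin n → ℤ) → ℕ, x = ∑ g' ∈ G, c g' • g' := by
    intro x hx
    rw [← hG] at hx
    obtain ⟨l, hl, hsum⟩ := AddSubmonoid.exists_multiset_of_mem_closure hx
    refine ⟨fun g' => l.count g', ?_⟩
    have h1 : l.toFinset ⊆ G := fun g' hg' => hl g' (Multiset.mem_toFinset.mp hg')
    rw [← hsum]
    exact Finset.sum_multiset_count_of_subset l G h1
  choose c hc using fun k => hcoef (v (g k)) (hmem k)
  -- Dickson's lemma
  have hpwo : (Set.univ : Set ({x // x ∈ G} → ℕ)).IsPWO :=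
    Set.isPWO_of_wellQuasiOrderedLE _
  obtain ⟨m', n', hmn, hle⟩ :=
    Set.PartiallyWellOrderedOn.exists_lt hpwo (f := fun k (g' : {x // x ∈ G}) => c k g'.1) (fun _ => Set.mem_univ _)
  set t : Fin n → ℤ := ∑ g' ∈ G, (c n' g' - c m' g') • g' with htdef
  have htT : t ∈ T i := sum_mem (fun g' hg' => nsmul_mem (hGT g' hg') _)
  have heq : v (g n') = v (g m') + t := by
    rw [hc n', hc m', htdef, ← Finset.sum_add_distrib]
    refine Finset.sum_congr rfl (fun x hx => ?_)
    rw [← add_nsmul]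
    congr 1
    have := hle ⟨x, hx⟩
    simp only at this
    omega
  have hltmn : lt (v (g n')) (v (g m')) := hlt' _ _ (hg hmn)
  rcases hzero t with ht0 | htpos
  · rw [ht0, add_zero] at heq
    rw [heq] at hltmn
    exact hirr _ hltmn
  · have h2 := hcompat 0 i t htT (v (g m')) (hmem m') htpos
    rw [zero_add, add_comm, ← heq] at h2
    exact hirr _ (htrans _ _ _ h2 hltmn)

/-- over a field `K` complete for a discrete valuation, for `r ∈ ℚⁿ` and
the term preorder `≤_r` built from `val_r(aX^u) = val(a) − r·u` and a generalized
monomial order `≤_ω`, any sequence of terms strictly decreasing for `≤_r` has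
`val_r(t_j) → +∞`. -/
theorem strictly_decreasing_terms_val_tendsto_atTop
    (n : ℕ) (K : Type) [Field K] [UniformSpace K] [CompleteSpace K]
    (val : K → ℝ)
    (hvmul : ∀ a b : K, a ≠ 0 → b ≠ 0 → val (a * b) = val a + val b)
    (hvadd : ∀ a b : K, a ≠ 0 → b ≠ 0 → a + b ≠ 0 → min (val a) (val b) ≤ val (a + b))
    (hdisc : ∀ a : K, a ≠ 0 → ∃ z : ℤ, val a = (z : ℝ))
    (r : Fin n → ℚ)
    (I : Type) [Finite I] (T : I → AddSubmonoid (Fin n → ℤ))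
    (hFG : ∀ i, (T i).FG)
    (hunit : ∀ i, ∀ v ∈ T i, -v ∈ T i → v = 0)
    (hgen : ∀ i, AddSubgroup.closure (T i : Set (Fin n → ℤ)) = ⊤)
    (hcover : ∀ v : Fin n → ℤ, ∃ i, v ∈ T i)
    (lt : (Fin n → ℤ) → (Fin n → ℤ) → Prop)
    (hlt : IsStrictTotalOrder (Fin n → ℤ) lt)
    (hzero : ∀ v : Fin n → ℤ, v = 0 ∨ lt 0 v)
    (hcompat : ∀ ρ : Fin n → ℤ, ∀ i, ∀ s ∈ T i, ∀ t ∈ T i, lt ρ s → lt (ρ + t) (s + t))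
    (a : ℕ → K) (u : ℕ → (Fin n → ℤ)) (ha : ∀ j, a j ≠ 0)
    (hdec : ∀ j, TermLt val r lt (a (j + 1), u (j + 1)) (a j, u j)) :
    Tendsto (fun j => val (a j) - rdot r (u j)) atTop atTop := by
  classical
  set w : ℕ → ℝ := fun j => val (a j) - rdot r (u j) with hwdef
  have hstep : ∀ j, w j ≤ w (j + 1) := by
    intro j
    rcases hdec j with h | ⟨h, -⟩
    · exact le_of_lt h
    · exact le_of_eq h.symm
  have hmono : Monotone w := monotone_nat_of_le_succ hstep
  apply tendsto_atTop_atTop_of_monotone hmono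
  by_contra hB
  push_neg at hB
  obtain ⟨B, hB⟩ := hB
  -- the common denominator
  set D : ℕ := ∏ k, (r k).den with hDdef
  have hDpos : 0 < D := Finset.prod_pos (fun k _ => (r k).pos)
  have hden_mul : ∀ q : ℚ, q.den ∣ D → ∃ z : ℤ, (D : ℚ) * q = z := by
    intro q hq
    obtain ⟨cq, hcq⟩ := hq
    refine ⟨(cq : ℤ) * q.num, ?_⟩
    have hden : ((q.den : ℚ)) ≠ 0 := by exact_mod_cast q.den_nz
    have h2 : q * (q.den : ℚ) = (q.num : ℚ) := (eq_div_iff hden).mp (q.num_div_den).symm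
    push_cast [hcq]
    rw [mul_comm ((q.den : ℚ)) (cq : ℚ), mul_assoc, mul_comm ((q.den : ℚ)) q, h2]
  have hrd : ∀ k, ∃ z : ℤ, (D : ℚ) * r k = z := fun k =>
    hden_mul (r k) (Finset.dvd_prod_of_mem (fun k => (r k).den) (Finset.mem_univ k))
  choose zr hzr using hrd
  -- integer values of D * rdot
  have hZ : ∀ uu : Fin n → ℤ, ∃ z : ℤ, (z : ℝ) = (D : ℝ) * rdot r uu := by
    intro uu
    refine ⟨∑ k, zr k * uu k, ?_⟩
    have hq : ((∑ k, zr k * uu k : ℤ) : ℚ) = (D : ℚ) * ∑ k, r k * (uu k : ℚ) := by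
      rw [Finset.mul_sum]
      push_cast
      exact Finset.sum_congr rfl (fun k _ => by rw [← mul_assoc, hzr k])
    have h1 : rdot r uu = ((∑ k, r k * (uu k : ℚ) : ℚ) : ℝ) := by
      rw [rdot]; push_cast; rfl
    rw [h1]
    exact_mod_cast hq
  choose Z hZ' using hZ
  choose zv hzv using fun j => hdisc (a j) (ha j)
  set m : ℕ → ℤ := fun j => D * zv j - Z (u j) with hmdef
  have hm : ∀ j, (m j : ℝ) = (D : ℝ) * w j := by
    intro j
    show ((D * zv j - Z (u j) : ℤ) : ℝ) = (D : ℝ) * (val (a j) - rdot r (u j))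
    push_cast
    rw [hzv j, hZ' (u j)]
    ring
  have hmmono : ∀ i j, i ≤ j → m i ≤ m j := by
    intro i j hij
    have h1 : (m i : ℝ) ≤ (m j : ℝ) := by
      rw [hm i, hm j]
      exact mul_le_mul_of_nonneg_left (hmono hij) (by positivity)
    exact_mod_cast h1
  have hbd : ∀ j, m j ≤ ⌈(D : ℝ) * B⌉ := by
    intro j
    have h1 : (m j : ℝ) ≤ (D : ℝ) * B := by
      rw [hm j]
      exact mul_le_mul_of_nonneg_left (le_of_lt (hB j)) (by positivity)
    have h2 := h1.trans (Int.le_ceil _)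
    exact_mod_cast h2
  obtain ⟨M, ⟨N, hN⟩, hmax⟩ := Int.exists_greatest_of_bdd (P := fun z => ∃ j, m j = z)
    ⟨⌈(D : ℝ) * B⌉, fun z hz => by obtain ⟨j, rfl⟩ := hz; exact hbd j⟩ ⟨m 0, 0, rfl⟩
  have hweq : ∀ j, N ≤ j → w (j + 1) = w j := by
    intro j hj
    have h1 : m j = M := le_antisymm (hmax _ ⟨j, rfl⟩) (hN ▸ hmmono N j hj)
    have h2 : m (j + 1) = M := le_antisymm (hmax _ ⟨j + 1, rfl⟩) (hN ▸ hmmono N (j + 1) (by omega))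
    have h3 : (D : ℝ) * w (j + 1) = (D : ℝ) * w j := by rw [← hm, ← hm, h1, h2]
    exact mul_left_cancel₀ (by positivity) h3
  have hdesc : ∀ k, lt (u (N + k + 1)) (u (N + k)) := by
    intro k
    rcases hdec (N + k) with h | ⟨-, -, h⟩
    · exact absurd h (not_lt.mpr (le_of_eq (hweq (N + k) (Nat.le_add_right N k))))
    · exact h
  exact no_infinite_descent T hFG hcover lt hlt hzero hcompat (fun k => u (N + k))
    (fun k => hdesc k)
end

section
/- Let K be a complete discretely valued field, r ∈ ℚⁿ, and J an ideal of the polytopal affinoid algebra K{X; r}. For each cone T_i of a conic decomposition of ℤⁿ, there is a finite subset E_i of lm(J) ∩ T_i such that lm(J) ∩ T_i = T_i · E_i (i.e., lm(J) ∩ T_i is a finitely generated T_i-module). -/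
/-- A Laurent series `Σ a_u X^u` (given by its coefficient function) lies in `K{X;r}`
iff `val(a_u) − r·u → +∞`, i.e. for each `C` only finitely many nonzero terms have
`val(a_u) − r·u < C`. -/
def Converges {n : ℕ} {K : Type} [Zero K] (val : K → ℝ) (r : Fin n → ℚ)
    (f : (Fin n → ℤ) → K) : Prop :=
  ∀ C : ℝ, {u : Fin n → ℤ | f u ≠ 0 ∧ val (f u) - rdot r u < C}.Finite

/-- Multiplication of `f` by the monomial `X^t`: the coefficients get shifted. -/
def shift {n : ℕ} {K : Type} (t : Fin n → ℤ) (f : (Fin n → ℤ) → K) : (Fin n → ℤ) → K :=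
  fun α => f (α - t)

/-- Multiplication in `K{X;r}` (Cauchy product, the inner sums being `tsum`s). -/
noncomputable def lmul {n : ℕ} {K : Type} [Field K] [UniformSpace K]
    (g f : (Fin n → ℤ) → K) : (Fin n → ℤ) → K :=
  fun α => ∑' u : Fin n → ℤ, g u * f (α - u)

/-- `IsLM val r lt f m` : `m` is the leading monomial of `f ∈ K{X;r}`, i.e. the largest
monomial, for the generalized monomial order `lt`, of the initial form `in_r(f)`
(the part of `f` of minimal `val_r`-weight `val(a_u) − r·u`). -/
def IsLM {n : ℕ} {K : Type} [Zero K] (val : K → ℝ) (r : Fin n → ℚ)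
    (lt : (Fin n → ℤ) → (Fin n → ℤ) → Prop)
    (f : (Fin n → ℤ) → K) (m : Fin n → ℤ) : Prop :=
  f m ≠ 0 ∧
  (∀ u, f u ≠ 0 → val (f m) - rdot r m ≤ val (f u) - rdot r u) ∧
  (∀ u, f u ≠ 0 → u ≠ m → val (f u) - rdot r u = val (f m) - rdot r m → lt u m)

/-- `rdot` is additive in the exponent. -/
lemma rdot_add {n : ℕ} (r : Fin n → ℚ) (a b : Fin n → ℤ) :
    rdot r (a + b) = rdot r a + rdot r b := by
  unfold rdot
  rw [← Finset.sum_add_distrib]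
  refine Finset.sum_congr rfl fun k _ => ?_
  have : ((a + b) k : ℤ) = a k + b k := rfl
  rw [this]
  push_cast
  ring

/-- `ℕ^k` is partially well ordered (Dickson). -/
lemma piNat_isPWO {k : ℕ} (S : Set (Fin k → ℕ)) : S.IsPWO := by
  have h : IsWellOrder ℕ (· < ·) := inferInstance
  exact Set.isPWO_of_wellQuasiOrderedLE S

/-- Dickson's lemma: a subset of `ℕ^k` closed under addition is a finitely
generated `ℕ^k`-module. -/
lemma dickson {k : ℕ} (S : Set (Fin k → ℕ)) (hS : ∀ s ∈ S, ∀ a, a + s ∈ S) :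
    ∃ B : Finset (Fin k → ℕ), ↑B ⊆ S ∧ S = {m | ∃ b ∈ B, ∃ a, m = a + b} := by
  classical
  set M : Set (Fin k → ℕ) := {m | m ∈ S ∧ ∀ x ∈ S, x ≤ m → x = m} with hM
  have hdom : ∀ s ∈ S, ∃ m ∈ M, m ≤ s := by
    intro s hs
    have hwf : {x | x ∈ S ∧ x ≤ s}.IsWF := (piNat_isPWO {x | x ∈ S ∧ x ≤ s}).isWF
    have hne : {x | x ∈ S ∧ x ≤ s}.Nonempty := ⟨s, hs, le_refl s⟩
    refine ⟨hwf.min hne, ⟨(hwf.min_mem hne).1, ?_⟩, (hwf.min_mem hne).2⟩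
    intro x hx hxle
    by_contra hne'
    exact hwf.not_lt_min hne ⟨hx, hxle.trans (hwf.min_mem hne).2⟩
      (lt_of_le_of_ne hxle hne')
  have hMfin : M.Finite := by
    by_contra hinf
    have hinf' : M.Infinite := hinf
    obtain f := hinf'.natEmbedding
    obtain ⟨a, b, hab, hle⟩ := (piNat_isPWO M) (fun n => f n)
    have heq : ((f a : Fin k → ℕ)) = (f b : Fin k → ℕ) := (f b).2.2 _ (f a).2.1 hle
    exact hab.ne (f.injective (Subtype.ext heq))
  refine ⟨hMfin.toFinset, ?_, ?_⟩
  · intro m hm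
    rw [Finset.mem_coe, Set.Finite.mem_toFinset] at hm
    exact hm.1
  · ext m
    constructor
    · intro hm
      obtain ⟨b, hb, hble⟩ := hdom m hm
      refine ⟨b, hMfin.mem_toFinset.2 hb, m - b, ?_⟩
      funext j
      exact (Nat.sub_add_cancel (hble j)).symm
    · rintro ⟨b, hb, a, rfl⟩
      exact hS b ((hMfin.mem_toFinset).1 hb).1 a

/-- A subset of a finitely generated submonoid of `ℤⁿ` that is closed under
translation by the submonoid is a finitely generated module over it. -/
lemma fg_module_of_closed {n : ℕ} (T : AddSubmonoid (Fin n → ℤ)) (hFG : T.FG)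
    (S : Set (Fin n → ℤ)) (hST : S ⊆ (T : Set (Fin n → ℤ)))
    (hS : ∀ s ∈ S, ∀ t ∈ T, t + s ∈ S) :
    ∃ E : Finset (Fin n → ℤ), ↑E ⊆ S ∧
      S = {m | ∃ e ∈ E, ∃ s ∈ T, m = s + e} := by
  classical
  obtain ⟨F, hF⟩ := hFG
  set k := F.card with hk
  set g : Fin k → (Fin n → ℤ) := fun j => (F.equivFin.symm j : Fin n → ℤ) with hg
  have hgF : ∀ j, g j ∈ F := fun j => (F.equivFin.symm j).2
  have hgT : ∀ j, g j ∈ T := by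
    intro j
    rw [← hF]
    exact AddSubmonoid.subset_closure (hgF j)
  set φ : (Fin k → ℕ) → (Fin n → ℤ) := fun a => ∑ j, (a j) • g j with hφ
  have hφadd : ∀ a b, φ (a + b) = φ a + φ b := by
    intro a b
    rw [hφ]
    simp only [← Finset.sum_add_distrib]
    refine Finset.sum_congr rfl fun j _ => ?_
    have : (a + b) j = a j + b j := rfl
    rw [this, add_nsmul]
  have hφT : ∀ a, φ a ∈ T := by
    intro a
    exact AddSubmonoid.sum_mem T fun j _ => AddSubmonoid.nsmul_mem T (hgT j) (a j)
  have hφsurj : ∀ t ∈ T, ∃ a, φ a = t := by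
    intro t ht
    rw [← hF] at ht
    induction ht using AddSubmonoid.closure_induction with
    | mem x hx =>
        refine ⟨fun j => if j = F.equivFin ⟨x, hx⟩ then 1 else 0, ?_⟩
        show (∑ j, (if j = F.equivFin ⟨x, hx⟩ then 1 else 0 : ℕ) • g j) = x
        rw [Finset.sum_eq_single (F.equivFin ⟨x, hx⟩)]
        · simp [hg]
        · intro j _ hj
          simp [hj]
        · simp
    | zero =>
        refine ⟨0, ?_⟩
        show (∑ j, ((0 : Fin k → ℕ) j) • g j) = 0
        simp
    | add x y hx hy ihx ihy =>
        obtain ⟨a, ha⟩ := ihx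
        obtain ⟨b, hb⟩ := ihy
        exact ⟨a + b, by rw [hφadd, ha, hb]⟩
  set S' : Set (Fin k → ℕ) := φ ⁻¹' S with hS'
  have hS'cl : ∀ s ∈ S', ∀ a, a + s ∈ S' := by
    intro s hs a
    have : φ (a + s) = φ a + φ s := hφadd a s
    simp only [hS', Set.mem_preimage] at hs ⊢
    rw [this]
    exact hS (φ s) hs (φ a) (hφT a)
  obtain ⟨B, hBS, hBgen⟩ := dickson S' hS'cl
  refine ⟨B.image φ, ?_, ?_⟩
  · intro e he
    simp only [Finset.coe_image, Set.mem_image, Finset.mem_coe] at he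
    obtain ⟨b, hb, rfl⟩ := he
    exact hBS hb
  · ext m
    constructor
    · intro hm
      obtain ⟨a, ha⟩ := hφsurj m (hST hm)
      have haS' : a ∈ S' := by simp only [hS', Set.mem_preimage, ha]; exact hm
      rw [hBgen] at haS'
      obtain ⟨b, hb, c, rfl⟩ := haS'
      exact ⟨φ b, Finset.mem_image_of_mem φ hb, φ c, hφT c, by rw [← ha, hφadd]⟩
    · rintro ⟨e, he, s, hs, rfl⟩
      simp only [Finset.mem_image] at he
      obtain ⟨b, hb, rfl⟩ := he
      exact hS (φ b) (hBS hb) s hs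

/-- let `J` be an ideal of `K{X;r}` (`K` a complete discretely valued
field, `r ∈ ℚⁿ`). For each cone `T_i` of a conic decomposition of `ℤⁿ`, there is a finite
`E_i ⊆ lm(J) ∩ T_i` with `lm(J) ∩ T_i = T_i · E_i`, i.e. `lm(J) ∩ T_i` is a finitely
generated `T_i`-module. -/
theorem lm_ideal_inter_cone_finitely_generated
    (n : ℕ) (K : Type) [Field K] [UniformSpace K] [CompleteSpace K]
    (val : K → ℝ)
    (hvmul : ∀ a b : K, a ≠ 0 → b ≠ 0 → val (a * b) = val a + val b)
    (hvadd : ∀ a b : K, a ≠ 0 → b ≠ 0 → a + b ≠ 0 → min (val a) (val b) ≤ val (a + b))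
    (hdisc : ∀ a : K, a ≠ 0 → ∃ z : ℤ, val a = (z : ℝ))
    (r : Fin n → ℚ)
    (I : Type) [Finite I] (T : I → AddSubmonoid (Fin n → ℤ))
    (hFG : ∀ i, (T i).FG)
    (hunit : ∀ i, ∀ v ∈ T i, -v ∈ T i → v = 0)
    (hgen : ∀ i, AddSubgroup.closure (T i : Set (Fin n → ℤ)) = ⊤)
    (hcover : ∀ v : Fin n → ℤ, ∃ i, v ∈ T i)
    (lt : (Fin n → ℤ) → (Fin n → ℤ) → Prop)
    (hlt : IsStrictTotalOrder (Fin n → ℤ) lt)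
    (hzero : ∀ v : Fin n → ℤ, v = 0 ∨ lt 0 v)
    (hcompat : ∀ ρ : Fin n → ℤ, ∀ i, ∀ s ∈ T i, ∀ t ∈ T i, lt ρ s → lt (ρ + t) (s + t))
    (J : Set ((Fin n → ℤ) → K))
    (hJconv : ∀ f ∈ J, Converges val r f)
    (hJzero : (0 : (Fin n → ℤ) → K) ∈ J)
    (hJadd : ∀ f ∈ J, ∀ g ∈ J, f + g ∈ J)
    (hJneg : ∀ f ∈ J, -f ∈ J)
    (hJmul : ∀ f ∈ J, ∀ g : (Fin n → ℤ) → K, Converges val r g → lmul g f ∈ J) :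
    ∀ i : I, ∃ E : Finset (Fin n → ℤ),
      (↑E : Set (Fin n → ℤ)) ⊆
        {m | (∃ f ∈ J, f ≠ 0 ∧ IsLM val r lt f m) ∧ m ∈ T i} ∧
      {m | (∃ f ∈ J, f ≠ 0 ∧ IsLM val r lt f m) ∧ m ∈ T i} =
        {m | ∃ e ∈ E, ∃ s ∈ T i, m = s + e} := by
  classical
  intro i
  set S : Set (Fin n → ℤ) := {m | (∃ f ∈ J, f ≠ 0 ∧ IsLM val r lt f m) ∧ m ∈ T i} with hSdef
  have hST : S ⊆ (T i : Set (Fin n → ℤ)) := fun m hm => hm.2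
  have hScl : ∀ m ∈ S, ∀ t ∈ T i, t + m ∈ S := by
    rintro m ⟨⟨f, hfJ, hfne, hflm⟩, hmT⟩ t htT
    -- the monomial X^t
    set g : (Fin n → ℤ) → K := fun u => if u = t then (1 : K) else 0 with hgdef
    have hgconv : Converges val r g := by
      intro C
      apply Set.Finite.subset (Set.finite_singleton t)
      intro u hu
      by_contra hut
      simp only [Set.mem_singleton_iff] at hut
      exact hu.1 (if_neg hut)
    have hlmul : lmul g f = shift t f := by
      funext α
      unfold lmul
      rw [tsum_eq_single t]
      · simp [hgdef, shift]
      · intro u hu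
        simp [hgdef, if_neg hu]
    have hshiftJ : shift t f ∈ J := hlmul ▸ hJmul f hfJ g hgconv
    obtain ⟨hfm, hfmin, hfmax⟩ := hflm
    have hkey : ∀ u : Fin n → ℤ, shift t f u = f (u - t) := fun u => rfl
    have htm : (t + m) - t = m := by abel
    have hshiftne : shift t f ≠ 0 := by
      intro h0
      have : shift t f (t + m) = 0 := by rw [h0]; rfl
      rw [hkey, htm] at this
      exact hfm this
    have hrd : ∀ u : Fin n → ℤ, rdot r u = rdot r t + rdot r (u - t) := by
      intro u
      rw [← rdot_add]
      congr 1
      abel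
    refine ⟨⟨shift t f, hshiftJ, hshiftne, ?_, ?_, ?_⟩, AddSubmonoid.add_mem _ htT hmT⟩
    · rw [hkey, htm]; exact hfm
    · intro u hu
      rw [hkey] at hu ⊢
      rw [hkey, htm, hrd u, hrd (t + m), htm]
      have := hfmin (u - t) hu
      linarith
    · intro u hu hune hueq
      rw [hkey] at hu
      rw [hkey, hkey, htm, hrd u, hrd (t + m), htm] at hueq
      have hune' : u - t ≠ m := by
        intro h
        apply hune
        rw [← h]
        abel
      have hlt' : lt (u - t) m := hfmax (u - t) hu hune' (by linarith)
      have := hcompat (u - t) i m hmT t htT hlt'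
      have h1 : u - t + t = u := by abel
      have h2 : m + t = t + m := by abel
      rwa [h1, h2] at this
  obtain ⟨E, hE1, hE2⟩ := fg_module_of_closed (T i) (hFG i) S hST
    (fun s hs t ht => hScl s hs t ht)
  exact ⟨E, hE1, hE2⟩
end

section
/- For f, g in K{X;r} and any index i of the conic decomposition, the set lm_i(f)·T_i(f) ∩ lm_i(g)·T_i(g) ⊆ T_i is a finitely generated T_i-module. -/
/-- Every subset of a finitely generated submonoid of `ℤⁿ` that is closed under
addition by elements of the submonoid is a finitely generated module over it. -/
lemma module_fg {n : ℕ} (Ti : AddSubmonoid (Fin n → ℤ)) (hFG : Ti.FG)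
    (M : Set (Fin n → ℤ)) (hMsub : ∀ m ∈ M, m ∈ Ti)
    (hclosed : ∀ m ∈ M, ∀ s ∈ Ti, s + m ∈ M) :
    ∃ E : Finset (Fin n → ℤ), (↑E : Set (Fin n → ℤ)) ⊆ M ∧
      M = {m | ∃ e ∈ E, ∃ s ∈ Ti, m = s + e} := by
  obtain ⟨S, hS⟩ := hFG
  set φ : ((↥S : Type) → ℕ) → (Fin n → ℤ) := fun c => ∑ v : ↥S, c v • (v : Fin n → ℤ) with hφ
  have hφ_add : ∀ a b, φ (a + b) = φ a + φ b := by
    intro a b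
    simp only [hφ, Pi.add_apply, add_smul, Finset.sum_add_distrib]
  have hφ_mem : ∀ c, φ c ∈ Ti := by
    intro c
    refine AddSubmonoid.sum_mem _ fun v _ => AddSubmonoid.nsmul_mem _ ?_ _
    have : (v : Fin n → ℤ) ∈ (S : Set (Fin n → ℤ)) := v.2
    rw [← hS]
    exact AddSubmonoid.subset_closure this
  have hφ_surj : ∀ m ∈ Ti, ∃ c, φ c = m := by
    intro m hm
    rw [← hS, ← Submodule.span_nat_eq_addSubmonoidClosure] at hm
    obtain ⟨f, -, hf⟩ := Submodule.mem_span_finset.1 hm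
    refine ⟨fun v => f v, ?_⟩
    rw [hφ]
    simpa using (Finset.sum_coe_sort S (fun v => f v • v)).trans hf
  -- minimal elements
  set M' : Set ((↥S : Type) → ℕ) := φ ⁻¹' M with hM'
  set Emin : Set ((↥S : Type) → ℕ) := {a ∈ M' | ∀ b ∈ M', b ≤ a → b = a} with hEmin
  have hanti : IsAntichain (· ≤ ·) Emin := by
    intro a ha b hb hne hle
    exact hne (ha.2 a ha.1 (le_refl a) ▸ hb.2 a ha.1 hle)
  have hPWO : ∀ s : Set ((↥S : Type) → ℕ), s.IsPWO := fun s =>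
    Set.isPWO_of_wellQuasiOrderedLE s
  have hfin : Emin.Finite := hanti.finite_of_partiallyWellOrderedOn (hPWO Emin)
  have hmin_le : ∀ a ∈ M', ∃ e ∈ Emin, e ≤ a := by
    intro a ha
    set D : Set ((↥S : Type) → ℕ) := {b ∈ M' | b ≤ a} with hD
    have hwf : D.IsWF := (hPWO D).isWF
    have hne : D.Nonempty := ⟨a, ha, le_refl a⟩
    refine ⟨hwf.min hne, ⟨(hwf.min_mem hne).1, ?_⟩, (hwf.min_mem hne).2⟩
    intro b hb hble
    by_contra hbne
    exact hwf.not_lt_min hne ⟨hb, hble.trans (hwf.min_mem hne).2⟩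
      (lt_of_le_of_ne hble hbne)
  refine ⟨hfin.toFinset.image φ, ?_, ?_⟩
  · intro m hm
    simp only [Finset.coe_image, Set.Finite.coe_toFinset, Set.mem_image] at hm
    obtain ⟨a, ha, rfl⟩ := hm
    exact ha.1
  · ext m
    constructor
    · intro hm
      obtain ⟨c, rfl⟩ := hφ_surj m (hMsub m hm)
      obtain ⟨e, he, hle⟩ := hmin_le c hm
      refine ⟨φ e, ?_, φ (c - e), hφ_mem _, ?_⟩
      · simp only [Finset.mem_image, Set.Finite.mem_toFinset]
        exact ⟨e, he, rfl⟩
      · have hce : c - e + e = c := funext fun x => Nat.sub_add_cancel (hle x)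
        rw [← hφ_add, hce]
    · rintro ⟨e, heE, s, hs, rfl⟩
      have heM : e ∈ M := by
        simp only [Finset.mem_image, Set.Finite.mem_toFinset] at heE
        obtain ⟨a, ha, rfl⟩ := heE
        exact ha.1
      exact hclosed e heM s hs

lemma IsLM_shift {n : ℕ} {K : Type} [Zero K] (val : K → ℝ) (r : Fin n → ℚ)
    (lt : (Fin n → ℤ) → (Fin n → ℤ) → Prop) (f : (Fin n → ℤ) → K)
    (t s m : Fin n → ℤ)
    (hcomp : ∀ ρ, lt ρ m → lt (ρ + s) (m + s))
    (h : IsLM val r lt (shift t f) m) : IsLM val r lt (shift (t + s) f) (m + s) := by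
  have key : ∀ u, shift (t + s) f u = shift t f (u - s) := by
    intro u
    show f (u - (t + s)) = f (u - s - t)
    rw [sub_sub, add_comm s t]
  have hrd : ∀ u : Fin n → ℤ, rdot r u = rdot r (u - s) + rdot r s := by
    intro u
    rw [← rdot_add, sub_add_cancel]
  have hms : rdot r (m + s) = rdot r m + rdot r s := rdot_add r m s
  obtain ⟨h1, h2, h3⟩ := h
  refine ⟨?_, ?_, ?_⟩
  · rw [key, add_sub_cancel_right]; exact h1
  · intro u hu
    rw [key] at hu ⊢
    rw [key, add_sub_cancel_right, hrd u, hms]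
    have := h2 (u - s) hu
    linarith
  · intro u hu hne heq
    rw [key] at hu heq
    rw [key, add_sub_cancel_right, hrd u] at heq
    have hne' : u - s ≠ m := by
      intro hc
      exact hne (by rw [← hc, sub_add_cancel])
    have := h3 (u - s) hu hne' (by linarith [hms, heq])
    have := hcomp (u - s) this
    rwa [sub_add_cancel] at this

/-- for `f, g ∈ K{X;r}` and any index `i` of the conic decomposition, the
set `lm_i(f)·T_i(f) ∩ lm_i(g)·T_i(g) ⊆ T_i` is a finitely generated `T_i`-module; here
`lm_i(h)·T_i(h) = {lm(X^t h) : t ∈ T_i(h)} = {m ∈ T_i : ∃ t, lm(X^t h) = m}`. -/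
theorem cone_lead_intersection_finitely_generated
    (n : ℕ) (K : Type) [Field K] [UniformSpace K] [CompleteSpace K]
    (val : K → ℝ)
    (hvmul : ∀ a b : K, a ≠ 0 → b ≠ 0 → val (a * b) = val a + val b)
    (hvadd : ∀ a b : K, a ≠ 0 → b ≠ 0 → a + b ≠ 0 → min (val a) (val b) ≤ val (a + b))
    (hdisc : ∀ a : K, a ≠ 0 → ∃ z : ℤ, val a = (z : ℝ))
    (r : Fin n → ℚ)
    (I : Type) [Finite I] (T : I → AddSubmonoid (Fin n → ℤ))
    (hFG : ∀ i, (T i).FG)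
    (hunit : ∀ i, ∀ v ∈ T i, -v ∈ T i → v = 0)
    (hgen : ∀ i, AddSubgroup.closure (T i : Set (Fin n → ℤ)) = ⊤)
    (hcover : ∀ v : Fin n → ℤ, ∃ i, v ∈ T i)
    (lt : (Fin n → ℤ) → (Fin n → ℤ) → Prop)
    (hlt : IsStrictTotalOrder (Fin n → ℤ) lt)
    (hzero : ∀ v : Fin n → ℤ, v = 0 ∨ lt 0 v)
    (hcompat : ∀ ρ : Fin n → ℤ, ∀ i, ∀ s ∈ T i, ∀ t ∈ T i, lt ρ s → lt (ρ + t) (s + t))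
    (f g : (Fin n → ℤ) → K)
    (hf : Converges val r f) (hg : Converges val r g) (i : I) :
    ∃ E : Finset (Fin n → ℤ),
      (↑E : Set (Fin n → ℤ)) ⊆
        ({m | m ∈ T i ∧ ∃ t, IsLM val r lt (shift t f) m} ∩
         {m | m ∈ T i ∧ ∃ t, IsLM val r lt (shift t g) m}) ∧
      ({m | m ∈ T i ∧ ∃ t, IsLM val r lt (shift t f) m} ∩
       {m | m ∈ T i ∧ ∃ t, IsLM val r lt (shift t g) m}) =
        {m | ∃ e ∈ E, ∃ s ∈ T i, m = s + e} := by
  obtain ⟨E, hE1, hE2⟩ := module_fg (T i) (hFG i)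
    ({m | m ∈ T i ∧ ∃ t, IsLM val r lt (shift t f) m} ∩
     {m | m ∈ T i ∧ ∃ t, IsLM val r lt (shift t g) m})
    (fun m hm => hm.1.1)
    (fun m hm s hs => by
      refine ⟨⟨(T i).add_mem hs hm.1.1, ?_⟩, ⟨(T i).add_mem hs hm.2.1, ?_⟩⟩
      · obtain ⟨t, ht⟩ := hm.1.2
        refine ⟨t + s, ?_⟩
        rw [add_comm s m]
        exact IsLM_shift val r lt f t s m (fun ρ hρ => hcompat ρ i m hm.1.1 s hs hρ) ht
      · obtain ⟨t, ht⟩ := hm.2.2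
        refine ⟨t + s, ?_⟩
        rw [add_comm s m]
        exact IsLM_shift val r lt g t s m (fun ρ hρ => hcompat ρ i m hm.1.1 s hs hρ) ht)
  exact ⟨E, hE1, hE2⟩
end

section
/- Let f, g ∈ K{X;r}, i an index of the conic decomposition, and v ∈ lm_i(f)T_i(f) ∩ lm_i(g)T_i(g). Define the S-pair S(i,f,g,v) = lc_i(g)·(v/lm_i(f))·f − lc_i(f)·(v/lm_i(g))·g. Then lt(S(i,f,g,v)) <_r lc_i(f)lc_i(g)·v, i.e., the leading term of the S-pair is strictly smaller than the common leading term lc_i(f)lc_i(g)v that cancels. -/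
/-- for `f, g ∈ K{X;r}`, a cone index `i` and
`v ∈ lm_i(f)T_i(f) ∩ lm_i(g)T_i(g)`, the S-pair
`S(i,f,g,v) = lc_i(g)·(v/lm_i(f))·f − lc_i(f)·(v/lm_i(g))·g` has leading term strictly
smaller, for `<_r`, than the cancelled common leading term `lc_i(f)lc_i(g)·X^v`
(i.e. every term of the S-pair is `<_r lc_i(f)lc_i(g)X^v`). Here `mf = lm_i(f)`,
`cf = lc_i(f) = f(mf)` and similarly for `g`. -/
theorem spair_leading_term_lt
    (n : ℕ) (K : Type) [Field K] [UniformSpace K] [CompleteSpace K]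
    (val : K → ℝ)
    (hvmul : ∀ a b : K, a ≠ 0 → b ≠ 0 → val (a * b) = val a + val b)
    (hvadd : ∀ a b : K, a ≠ 0 → b ≠ 0 → a + b ≠ 0 → min (val a) (val b) ≤ val (a + b))
    (hdisc : ∀ a : K, a ≠ 0 → ∃ z : ℤ, val a = (z : ℝ))
    (r : Fin n → ℚ)
    (I : Type) [Finite I] (T : I → AddSubmonoid (Fin n → ℤ))
    (hFG : ∀ i, (T i).FG)
    (hunit : ∀ i, ∀ v ∈ T i, -v ∈ T i → v = 0)
    (hgen : ∀ i, AddSubgroup.closure (T i : Set (Fin n → ℤ)) = ⊤)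
    (hcover : ∀ v : Fin n → ℤ, ∃ i, v ∈ T i)
    (lt : (Fin n → ℤ) → (Fin n → ℤ) → Prop)
    (hlt : IsStrictTotalOrder (Fin n → ℤ) lt)
    (hzero : ∀ v : Fin n → ℤ, v = 0 ∨ lt 0 v)
    (hcompat : ∀ ρ : Fin n → ℤ, ∀ i, ∀ s ∈ T i, ∀ t ∈ T i, lt ρ s → lt (ρ + t) (s + t))
    (f g : (Fin n → ℤ) → K)
    (hf : Converges val r f) (hg : Converges val r g)
    (i : I) (mf mg v : Fin n → ℤ)
    (hv : v ∈ T i)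
    (hvf : ∃ tf, v = tf + mf ∧ IsLM val r lt (shift tf f) v)
    (hvg : ∃ tg, v = tg + mg ∧ IsLM val r lt (shift tg g) v) :
    ∀ m : Fin n → ℤ,
      g mg * f (m - (v - mf)) - f mf * g (m - (v - mg)) ≠ 0 →
      TermLt val r lt
        (g mg * f (m - (v - mf)) - f mf * g (m - (v - mg)), m)
        (f mf * g mg, v) := by
  -- valuation of 1 and of negatives
  have h1 : val (1 : K) = 0 := by
    have := hvmul 1 1 one_ne_zero one_ne_zero
    simp at this
    linarith
  have hneg : ∀ a : K, a ≠ 0 → val (-a) = val a := by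
    intro a ha
    have hm1 : val (-1 : K) = 0 := by
      have := hvmul (-1 : K) (-1) (by norm_num) (by norm_num)
      simp [h1] at this
      linarith
    have := hvmul (-1 : K) a (by norm_num) ha
    rw [neg_one_mul] at this
    rw [this, hm1]; ring
  intro m hm
  obtain ⟨tf, hvtf, hfv, hfle, hflt⟩ := hvf
  obtain ⟨tg, hvtg, hgv, hgle, hglt⟩ := hvg
  simp only [shift] at hfv hfle hflt hgv hgle hglt
  have htf : v - mf = tf := by rw [hvtf]; abel
  have htg : v - mg = tg := by rw [hvtg]; abel
  have hvmf : v - tf = mf := by rw [hvtf]; abel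
  have hvmg : v - tg = mg := by rw [hvtg]; abel
  rw [htf, htg] at hm ⊢
  rw [hvmf] at hfv hfle hflt
  rw [hvmg] at hgv hgle hglt
  have hmv : m ≠ v := by
    rintro rfl
    rw [hvmf, hvmg] at hm
    exact hm (by ring)
  set cf := f mf with hcf
  set cg := g mg with hcgdef
  set a := f (m - tf) with ha
  set b := g (m - tg) with hb
  have hq : val (cf * cg) = val cf + val cg := hvmul _ _ hfv hgv
  -- key claim
  have key : val cf + val cg - rdot r v ≤ val (cg * a - cf * b) - rdot r m ∧
      (val (cg * a - cf * b) - rdot r m = val cf + val cg - rdot r v → lt m v) := by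
    by_cases haz : a = 0
    · -- S = -(cf*b)
      have hbz : b ≠ 0 := by
        intro hbz; apply hm; rw [haz, hbz]; ring
      have hSval : val (cg * a - cf * b) = val cf + val b := by
        rw [haz, mul_zero, zero_sub, hneg _ (mul_ne_zero hfv hbz), hvmul _ _ hfv hbz]
      have h1 := hgle m hbz
      constructor
      · rw [hSval]; linarith
      · intro he
        apply hglt m hbz hmv
        rw [hSval] at he; linarith
    · by_cases hbz : b = 0
      · have hSval : val (cg * a - cf * b) = val cg + val a := by
          rw [hbz, mul_zero, sub_zero, hvmul _ _ hgv haz]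
        have h1 := hfle m haz
        constructor
        · rw [hSval]; linarith
        · intro he
          apply hflt m haz hmv
          rw [hSval] at he; linarith
      · -- both nonzero
        have hF : val (cg * a) = val cg + val a := hvmul _ _ hgv haz
        have hG : val (-(cf * b)) = val cf + val b := by
          rw [hneg _ (mul_ne_zero hfv hbz), hvmul _ _ hfv hbz]
        have h1 := hfle m haz
        have h2 := hgle m hbz
        rw [← ha] at h1
        rw [← hb] at h2
        have hsum : cg * a + -(cf * b) ≠ 0 := by
          intro h; apply hm; rw [← h]; ring
        have hmin := hvadd (cg * a) (-(cf * b)) (mul_ne_zero hgv haz)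
          (neg_ne_zero.mpr (mul_ne_zero hfv hbz)) hsum
        have hSe : cg * a - cf * b = cg * a + -(cf * b) := by ring
        rw [← hSe] at hmin hsum
        constructor
        · rcases le_total (val (cg * a)) (val (-(cf * b))) with hc | hc
          · rw [min_eq_left hc, hF] at hmin; linarith
          · rw [min_eq_right hc, hG] at hmin; linarith
        · intro he
          rcases le_total (val (cg * a)) (val (-(cf * b))) with hc | hc
          · apply hflt m haz hmv
            rw [min_eq_left hc, hF] at hmin
            linarith
          · apply hglt m hbz hmv
            rw [min_eq_right hc, hG] at hmin
            linarith
  simp only [TermLt]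
  rcases eq_or_lt_of_le key.1 with he | hlt'
  · exact Or.inr ⟨by rw [hq]; linarith, hmv, key.2 he.symm⟩
  · exact Or.inl (by rw [hq]; linarith)
end

section
/- Any conic decomposition of ℤⁿ contains at least n+1 cones. -/
open Finset Matrix

def dotHom {n : ℕ} (q : Fin n → ℚ) : (Fin n → ℤ) →+ ℚ where
  toFun v := ∑ j, q j * (v j : ℚ)
  map_zero' := by simp
  map_add' a b := by
    simp only [Pi.add_apply, Int.cast_add, mul_add, Finset.sum_add_distrib]

lemma pos_on_closure {n : ℕ} (S : Finset (Fin n → ℤ)) (q : Fin n → ℚ)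
    (hq : ∀ s ∈ S, s ≠ 0 → 0 < ∑ j, q j * (s j : ℚ)) :
    ∀ v ∈ AddSubmonoid.closure (S : Set (Fin n → ℤ)), v ≠ 0 →
      0 < ∑ j, q j * (v j : ℚ) := by
  intro v hv hvne
  obtain ⟨l, hl, hsum⟩ := AddSubmonoid.exists_multiset_of_mem_closure hv
  have hnn : ∀ a ∈ l, (0:ℚ) ≤ dotHom q a := by
    intro a ha
    rcases eq_or_ne a 0 with rfl | hne
    · simp
    · exact (hq a (hl a ha) hne).le
  obtain ⟨y, hyl, hyne⟩ : ∃ y ∈ l, y ≠ 0 := by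
    by_contra h
    push_neg at h
    apply hvne
    rw [← hsum]
    exact Multiset.sum_eq_zero h
  obtain ⟨l', rfl⟩ := Multiset.exists_cons_of_mem hyl
  have : dotHom q v = dotHom q y + (l'.map (dotHom q)).sum := by
    rw [← hsum, map_multiset_sum, Multiset.map_cons, Multiset.sum_cons]
  have h1 : 0 < dotHom q y := hq y (hl y hyl) hyne
  have h2 : 0 ≤ (l'.map (dotHom q)).sum :=
    Multiset.sum_nonneg fun x hx => by
      obtain ⟨a, ha, rfl⟩ := Multiset.mem_map.mp hx
      exact hnn a (Multiset.mem_cons_of_mem ha)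
  have := this ▸ add_pos_of_pos_of_nonneg h1 h2
  simpa [dotHom] using this

lemma denseRatVec (n : ℕ) :
    Dense {y : Fin n → ℝ | ∀ j, ∃ qq : ℚ, (qq : ℝ) = y j} := by
  have : {y : Fin n → ℝ | ∀ j, ∃ qq : ℚ, (qq : ℝ) = y j}
      = Set.pi Set.univ (fun _ : Fin n => Set.range ((↑) : ℚ → ℝ)) := by
    ext y; simp [Set.mem_pi, Set.range]
  rw [this]
  exact dense_pi Set.univ fun i _ => Rat.denseRange_cast

lemma zero_not_mem_hull {n : ℕ} (S : Finset (Fin n → ℤ))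
    (hpt : ∀ v ∈ AddSubmonoid.closure (S : Set (Fin n → ℤ)),
      -v ∈ AddSubmonoid.closure (S : Set (Fin n → ℤ)) → v = 0) :
    (0 : Fin n → ℝ) ∉ convexHull ℝ
      ((fun v : Fin n → ℤ => fun j => (v j : ℝ)) '' {s | s ∈ S ∧ s ≠ 0}) := by
  classical
  intro h0
  obtain ⟨ι, hfι, z, w, hrange, haff, hwpos, hwsum, hwcomb⟩ :=
    eq_pos_convex_span_of_mem_convexHull h0
  letI : Fintype ι := hfι
  have hne : Nonempty ι := by
    by_contra h
    rw [not_nonempty_iff] at h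
    rw [Finset.sum_eq_zero (fun i _ => (h.false i).elim)] at hwsum
    exact zero_ne_one hwsum
  have hzi : ∀ i, ∃ s, (s ∈ S ∧ s ≠ 0) ∧ (fun j => ((s j : ℝ))) = z i :=
    fun i => hrange ⟨i, rfl⟩
  choose sZ hsZ hzcast using hzi
  have hzco : ∀ i j, z i j = (sZ i j : ℝ) := fun i j => (congrFun (hzcast i) j).symm
  -- the rational matrix
  set c : ℚ →+* ℝ := Rat.castHom ℝ with hc
  set M : Matrix (Option (Fin n)) ι ℚ :=
    fun o i => o.elim 1 (fun j => (sZ i j : ℚ)) with hM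
  set b : Option (Fin n) → ℚ := fun o => o.elim 1 (fun _ => 0) with hb
  -- real injectivity
  have hinjR : ∀ u : ι → ℝ, (M.map c) *ᵥ u = 0 → u = 0 := by
    intro u hu
    have hrow : ∀ o, ∑ i, (M.map c) o i * u i = 0 := by
      intro o
      have := congrFun hu o
      simpa [Matrix.mulVec, dotProduct] using this
    have hsum0 : ∑ i, u i = 0 := by
      have := hrow none
      simp only [Matrix.map_apply] at this
      simpa [Matrix.map_apply, hM] using this
    have hvsub : Finset.univ.weightedVSub z u = (0 : Fin n → ℝ) := by
      rw [Finset.weightedVSub_eq_linear_combination _ hsum0]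
      funext j
      have := hrow (some j)
      simp only [Matrix.map_apply] at this
      simp only [Matrix.map_apply, hM, Option.elim] at this
      rw [Finset.sum_apply]
      simpa [hzco, mul_comm] using this
    rw [affineIndependent_iff_of_fintype] at haff
    exact funext (haff u hsum0 hvsub)
  -- rational injectivity
  have hinjQ : LinearMap.ker (Matrix.toLin' M) = ⊥ := by
    rw [LinearMap.ker_eq_bot']
    intro u hu
    have hu' : M *ᵥ u = 0 := by rwa [Matrix.toLin'_apply] at hu
    have : (M.map c) *ᵥ (fun i => ((u i : ℚ) : ℝ)) = 0 := by
      funext o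
      have h1 := RingHom.map_mulVec c M u o
      have h2 : c ((M *ᵥ u) o) = 0 := by rw [hu']; simp
      rw [h1] at h2
      exact h2
    have := hinjR _ this
    funext i
    have h := congrFun this i
    rw [Pi.zero_apply] at h
    exact_mod_cast h
  obtain ⟨gl, hgl⟩ := LinearMap.exists_leftInverse_of_injective (Matrix.toLin' M) hinjQ
  set N := LinearMap.toMatrix' gl with hN
  have hNM : N * M = 1 := by
    have := congrArg LinearMap.toMatrix' hgl
    rwa [LinearMap.toMatrix'_comp, LinearMap.toMatrix'_toLin', LinearMap.toMatrix'_id] at this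
  have hNMr : (N.map c) * (M.map c) = 1 := by
    rw [← Matrix.map_mul, hNM]
    exact Matrix.map_one _ (map_zero c) (map_one c)
  -- w equals a rational vector
  have hMw : (M.map c) *ᵥ w = fun o => c (b o) := by
    funext o
    cases o with
    | none =>
      simp only [Matrix.mulVec, dotProduct, Matrix.map_apply]
      simpa [Matrix.mulVec, dotProduct, hM, hb] using hwsum
    | some j =>
      have := congrFun hwcomb j
      rw [Finset.sum_apply] at this
      simp only [Pi.smul_apply, smul_eq_mul, Pi.zero_apply] at this
      simp only [Matrix.mulVec, dotProduct, Matrix.map_apply]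
      simp only [Matrix.mulVec, dotProduct, Matrix.map_apply, hM, hb, Option.elim]
      simp only [hzco, mul_comm] at this
      simpa [mul_comm] using this
  set wq : ι → ℚ := N *ᵥ b with hwq
  have hweq : ∀ i, w i = ((wq i : ℚ) : ℝ) := by
    have : w = (N.map c) *ᵥ ((M.map c) *ᵥ w) := by
      rw [Matrix.mulVec_mulVec, hNMr, Matrix.one_mulVec]
    intro i
    rw [this, hMw]
    have h2 := RingHom.map_mulVec c N b i
    rw [hwq]
    exact h2.symm
  have hwqpos : ∀ i, 0 < wq i := by
    intro i
    have h := hwpos i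
    rw [hweq i] at h
    exact Rat.cast_pos.mp h
  have hrelQ : ∀ j, ∑ i, wq i * (sZ i j : ℚ) = 0 := by
    intro j
    have hR : ∑ i, w i * z i j = 0 := by
      have := congrFun hwcomb j
      rw [Finset.sum_apply] at this
      simpa using this
    have hcast : ((∑ i, wq i * (sZ i j : ℚ) : ℚ) : ℝ) = ∑ i, w i * z i j := by
      push_cast
      refine Finset.sum_congr rfl fun i _ => ?_
      rw [hweq i, hzco i j]
    have hz0 : ((∑ i, wq i * (sZ i j : ℚ) : ℚ) : ℝ) = 0 := by rw [hcast, hR]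
    exact_mod_cast hz0
  -- clear denominators
  set D : ℕ := ∏ i, (wq i).den with hD
  have hDpos : 0 < D := Finset.prod_pos fun i _ => (wq i).pos
  have hdvd : ∀ i, (wq i).den ∣ D := fun i => Finset.dvd_prod_of_mem _ (Finset.mem_univ i)
  choose k hk using hdvd
  set cN : ι → ℕ := fun i => (wq i).num.toNat * k i with hcN
  have hkpos : ∀ i, 0 < k i := by
    intro i
    have h := hk i
    by_contra hki
    push_neg at hki
    have hz : k i = 0 := by omega
    rw [hz, mul_zero] at h
    omega
  have hcQ : ∀ i, ((cN i : ℚ)) = wq i * D := by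
    intro i
    have hnum : (((wq i).num.toNat : ℤ)) = (wq i).num :=
      Int.toNat_of_nonneg (Rat.num_pos.mpr (hwqpos i)).le
    have hden : (((wq i).den : ℚ)) ≠ 0 :=
      Nat.cast_ne_zero.mpr (wq i).den_nz
    have key : wq i * ((wq i).den : ℚ) = ((wq i).num : ℚ) :=
      ((div_eq_iff hden).mp (Rat.num_div_den (wq i))).symm
    have hnum' : (((wq i).num.toNat : ℚ)) = ((wq i).num : ℚ) := by exact_mod_cast hnum
    have h1 : ((cN i : ℚ)) = ((wq i).num : ℚ) * (k i : ℚ) := by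
      rw [hcN]
      push_cast
      rw [hnum']
    rw [h1, hk i]
    push_cast
    rw [← key]
    ring
  have hcNpos : 0 < cN ‹Nonempty ι›.some := by
    refine Nat.mul_pos ?_ (hkpos _)
    have := Rat.num_pos.mpr (hwqpos ‹Nonempty ι›.some)
    omega
  have hZrel : ∀ j, ∑ i, (cN i : ℤ) * sZ i j = 0 := by
    intro j
    have : ((∑ i, (cN i : ℤ) * sZ i j : ℤ) : ℚ) = 0 := by
      push_cast
      have : ∀ i, ((cN i : ℚ)) * ((sZ i j : ℚ)) = (D : ℚ) * (wq i * (sZ i j : ℚ)) := by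
        intro i; rw [hcQ i]; ring
      rw [Finset.sum_congr rfl (fun i _ => this i), ← Finset.mul_sum, hrelQ j, mul_zero]
    exact_mod_cast this
  -- contradiction with pointedness
  set i₀ := ‹Nonempty ι›.some with hi₀
  have hmem : ∀ i, sZ i ∈ AddSubmonoid.closure (S : Set (Fin n → ℤ)) :=
    fun i => AddSubmonoid.subset_closure (hsZ i).1
  have htotal : ∑ i, cN i • sZ i = (0 : Fin n → ℤ) := by
    funext j
    rw [Finset.sum_apply]
    simp only [Pi.smul_apply, smul_eq_mul, Pi.zero_apply]
    have := hZrel j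
    simpa using this
  set m : Fin n → ℤ := (cN i₀ - 1) • sZ i₀ + ∑ i ∈ Finset.univ.erase i₀, cN i • sZ i with hm
  have hmmem : m ∈ AddSubmonoid.closure (S : Set (Fin n → ℤ)) := by
    refine AddSubmonoid.add_mem _ (AddSubmonoid.nsmul_mem _ (hmem i₀) _) ?_
    exact AddSubmonoid.sum_mem _ fun i _ => AddSubmonoid.nsmul_mem _ (hmem i) _
  have hsm : sZ i₀ + m = 0 := by
    rw [hm, ← add_assoc]
    have h1 : sZ i₀ + (cN i₀ - 1) • sZ i₀ = cN i₀ • sZ i₀ := by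
      have he : cN i₀ = 1 + (cN i₀ - 1) := by omega
      conv_rhs => rw [he, add_smul, one_smul]
    rw [h1, Finset.add_sum_erase _ (fun i => cN i • sZ i) (Finset.mem_univ i₀)]
    exact htotal
  have hneg : -(sZ i₀) ∈ AddSubmonoid.closure (S : Set (Fin n → ℤ)) := by
    have hmeq : -(sZ i₀) = m := (neg_eq_of_add_eq_zero_right hsm)
    rwa [hmeq]
  exact (hsZ i₀).2 (hpt (sZ i₀) (hmem i₀) hneg)

lemma exists_pos_functional {n : ℕ} (S : Finset (Fin n → ℤ))
    (hpt : ∀ v ∈ AddSubmonoid.closure (S : Set (Fin n → ℤ)),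
      -v ∈ AddSubmonoid.closure (S : Set (Fin n → ℤ)) → v = 0) :
    ∃ q : Fin n → ℚ, ∀ s ∈ S, s ≠ 0 → 0 < ∑ j, q j * (s j : ℚ) := by
  classical
  set castR : (Fin n → ℤ) → (Fin n → ℝ) := fun v => fun j => (v j : ℝ) with hcastR
  set A : Set (Fin n → ℝ) := castR '' {s | s ∈ S ∧ s ≠ 0} with hA
  have hAfin : A.Finite := (S.finite_toSet.subset (fun s hs => hs.1)).image _
  have h0 : (0 : Fin n → ℝ) ∉ convexHull ℝ A := zero_not_mem_hull S hpt
  obtain ⟨f, u, hu0, hub⟩ := geometric_hahn_banach_point_closed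
    (convex_convexHull ℝ A) ((hAfin.isCompact_convexHull (𝕜 := ℝ)).isClosed) h0
  have hu : (0:ℝ) < u := by simpa using hu0
  -- the real functional as a vector
  have hfs : ∀ s ∈ S, s ≠ 0 → 0 < f (castR s) := by
    intro s hs hne
    exact lt_trans hu (hub _ (subset_convexHull ℝ A ⟨s, ⟨hs, hne⟩, rfl⟩))
  -- express f via coordinates
  set g : Fin n → ℝ := fun j => f (fun k => if j = k then 1 else 0) with hg
  have hfx : ∀ x : Fin n → ℝ, f x = ∑ j, x j * g j := by
    intro x
    have := LinearMap.pi_apply_eq_sum_univ (f : (Fin n → ℝ) →ₗ[ℝ] ℝ) x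
    simpa [g, smul_eq_mul] using this
  -- the open set of good functionals
  set U : Set (Fin n → ℝ) := {y | ∀ s ∈ S.filter (· ≠ 0), 0 < ∑ j, y j * ((s : Fin n → ℤ) j : ℝ)}
    with hU
  have hUopen : IsOpen U := by
    have : U = ⋂ s ∈ S.filter (· ≠ 0), {y : Fin n → ℝ | 0 < ∑ j, y j * ((s : Fin n → ℤ) j : ℝ)} := by
      ext y; simp [U, Set.mem_iInter]
    rw [this]
    refine isOpen_biInter_finset fun s hs => ?_
    have hc : Continuous fun y : Fin n → ℝ => ∑ j, y j * ((s j : ℝ)) :=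
      continuous_finset_sum _ fun j _ => (continuous_apply j).mul continuous_const
    exact isOpen_lt continuous_const hc
  have hUne : U.Nonempty := by
    refine ⟨g, fun s hs => ?_⟩
    rw [Finset.mem_filter] at hs
    have := hfs s hs.1 hs.2
    rw [hfx] at this
    simpa [castR, mul_comm] using this
  obtain ⟨y, hyQ, hyU⟩ := (denseRatVec n).exists_mem_open hUopen hUne
  choose q hq using hyQ
  refine ⟨q, fun s hs hne => ?_⟩
  have hy : 0 < ∑ j, y j * (s j : ℝ) := hyU s (Finset.mem_filter.mpr ⟨hs, hne⟩)
  have hcast : ((∑ j, q j * (s j : ℚ) : ℚ) : ℝ) = ∑ j, y j * (s j : ℝ) := by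
    push_cast
    exact Finset.sum_congr rfl fun j _ => by rw [hq j]
  have : (0:ℝ) < ((∑ j, q j * (s j : ℚ) : ℚ) : ℝ) := by rw [hcast]; exact hy
  exact_mod_cast this

/-- any conic decomposition of `ℤⁿ` (a finite family of finitely generated
submonoids with trivial units, each generating `ℤⁿ` as a group, whose union is `ℤⁿ`)
contains at least `n + 1` cones. -/
theorem conic_decomposition_card_ge
    (n : ℕ) (I : Type) [Finite I] (T : I → AddSubmonoid (Fin n → ℤ))
    (hFG : ∀ i, (T i).FG)
    (hunit : ∀ i, ∀ v ∈ T i, -v ∈ T i → v = 0)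
    (hgen : ∀ i, AddSubgroup.closure (T i : Set (Fin n → ℤ)) = ⊤)
    (hcover : ∀ v : Fin n → ℤ, ∃ i, v ∈ T i) :
    n + 1 ≤ Nat.card I := by
  classical
  by_contra hlt
  push_neg at hlt
  letI : Fintype I := Fintype.ofFinite I
  obtain ⟨i₀, -⟩ := hcover 0
  have hcard : Fintype.card I ≤ n := by
    rw [Nat.card_eq_fintype_card] at hlt
    omega
  -- per-cone strictly positive rational functionals
  have hq : ∀ i : I, ∃ q : Fin n → ℚ, ∀ v ∈ T i, v ≠ 0 → 0 < ∑ j, q j * (v j : ℚ) := by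
    intro i
    obtain ⟨S, hS⟩ := hFG i
    have hpt : ∀ v ∈ AddSubmonoid.closure (S : Set (Fin n → ℤ)),
        -v ∈ AddSubmonoid.closure (S : Set (Fin n → ℤ)) → v = 0 := by
      rw [hS]; exact hunit i
    obtain ⟨q, hq⟩ := exists_pos_functional S hpt
    refine ⟨q, ?_⟩
    have := pos_on_closure S q hq
    rwa [hS] at this
  choose q hqpos using hq
  set Q : Matrix I (Fin n) ℚ := fun i j => q i j with hQdef
  -- a nonzero rational vector on which all functionals are ≤ 0
  have hy : ∃ y : Fin n → ℚ, y ≠ 0 ∧ ∀ i, ∑ j, Q i j * y j ≤ 0 := by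
    by_cases hinj : Function.Injective (Matrix.toLin' Q)
    · have hrk := LinearMap.finrank_le_finrank_of_injective hinj
      rw [Module.finrank_pi, Module.finrank_pi, Fintype.card_fin] at hrk
      have heq : Module.finrank ℚ (Fin n → ℚ) = Module.finrank ℚ (I → ℚ) := by
        rw [Module.finrank_pi, Module.finrank_pi, Fintype.card_fin]
        omega
      have hsurj := (LinearMap.injective_iff_surjective_of_finrank_eq_finrank heq).mp hinj
      obtain ⟨y, hyv⟩ := hsurj (fun _ => (-1 : ℚ))
      refine ⟨y, ?_, ?_⟩
      · intro h
        rw [h, map_zero] at hyv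
        have := congrFun hyv i₀
        simp at this
      · intro i
        have := congrFun hyv i
        rw [Matrix.toLin'_apply] at this
        simp only [Matrix.mulVec, dotProduct] at this
        rw [this]
        norm_num
    · rw [Function.not_injective_iff] at hinj
      obtain ⟨a, b, hab, hne⟩ := hinj
      refine ⟨a - b, sub_ne_zero.mpr hne, ?_⟩
      intro i
      have h0 : Matrix.toLin' Q (a - b) = 0 := by
        rw [map_sub, hab, sub_self]
      have := congrFun h0 i
      rw [Matrix.toLin'_apply] at this
      simp only [Matrix.mulVec, dotProduct, Pi.zero_apply] at this
      rw [this]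
  obtain ⟨y, hyne, hyle⟩ := hy
  -- clear denominators to get an integer point
  set d : ℕ := ∏ j, (y j).den with hd
  have hdpos : 0 < d := Finset.prod_pos fun j _ => (y j).pos
  have hdvd : ∀ j, (y j).den ∣ d := fun j => Finset.dvd_prod_of_mem _ (Finset.mem_univ j)
  choose k hk using hdvd
  set x : Fin n → ℤ := fun j => (y j).num * (k j : ℤ) with hx
  have hxq : ∀ j, ((x j : ℚ)) = y j * d := by
    intro j
    have hden : (((y j).den : ℚ)) ≠ 0 := Nat.cast_ne_zero.mpr (y j).den_nz
    have key : y j * ((y j).den : ℚ) = ((y j).num : ℚ) :=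
      ((div_eq_iff hden).mp (Rat.num_div_den (y j))).symm
    rw [hx]
    push_cast
    rw [hk j]
    push_cast
    rw [← key]
    ring
  have hxne : x ≠ 0 := by
    intro h
    apply hyne
    funext j
    have h1 := congrFun h j
    rw [Pi.zero_apply] at h1
    have h2 : ((x j : ℚ)) = 0 := by rw [h1]; simp
    rw [hxq j] at h2
    have hd0 : ((d : ℚ)) ≠ 0 := Nat.cast_ne_zero.mpr hdpos.ne'
    rcases mul_eq_zero.mp h2 with h | h
    · exact h
    · exact absurd h hd0
  obtain ⟨i, hxT⟩ := hcover x
  have hpos := hqpos i x hxT hxne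
  have hsum : ∑ j, q i j * ((x j : ℚ)) = (d : ℚ) * ∑ j, Q i j * y j := by
    rw [Finset.mul_sum]
    refine Finset.sum_congr rfl fun j _ => ?_
    rw [hxq j, hQdef]
    ring
  have hle : (d : ℚ) * ∑ j, Q i j * y j ≤ 0 :=
    mul_nonpos_of_nonneg_of_nonpos (by positivity) (hyle i)
  rw [hsum] at hpos
  linarith
end

section
/- Let ≤ be a generalized monomial order on ℤⁿ whose underlying conic decomposition is the standard one (T_0 = ℕⁿ, and T_j for 1 ≤ j ≤ n generated by −(e_1+⋯+e_n) and the e_k, k ≠ j). Then for every nonzero Laurent polynomial f and every 0 ≤ i ≤ n, the set T_i(f) = {t ∈ ℤⁿ : lm(X^t f) ∈ T_i} is a monogenous (cyclic) T_i-module: T_i(f) = g + T_i for some g ∈ ℤⁿ. -/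
def psi (n : ℕ) (i : Fin (n + 1)) (v : Fin n → ℤ) : Fin n → ℤ :=
  Fin.cases v (fun j => fun k => if k = j then -v j else v k - v j) i

lemma psi_zero (n : ℕ) (v : Fin n → ℤ) : psi n 0 v = v := rfl

lemma psi_succ (n : ℕ) (j : Fin n) (v : Fin n → ℤ) :
    psi n j.succ v = fun k => if k = j then -v j else v k - v j := by
  simp [psi]

lemma psi_add (n : ℕ) (i : Fin (n + 1)) (v w : Fin n → ℤ) :
    psi n i (v + w) = psi n i v + psi n i w := by
  rcases Fin.eq_zero_or_eq_succ i with rfl | ⟨j, rfl⟩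
  · rfl
  · funext k
    simp only [psi_succ, Pi.add_apply]
    split <;> ring

lemma psi_psi (n : ℕ) (i : Fin (n + 1)) (v : Fin n → ℤ) : psi n i (psi n i v) = v := by
  rcases Fin.eq_zero_or_eq_succ i with rfl | ⟨j, rfl⟩
  · rfl
  · funext k
    simp only [psi_succ]
    split <;> simp_all

lemma single_mem (n : ℕ) (k : Fin n) (c : ℤ) (hc : 0 ≤ c) (S : AddSubmonoid (Fin n → ℤ))
    (hS : Pi.single k (1 : ℤ) ∈ S) : Pi.single k c ∈ S := by
  have : Pi.single k c = (c.toNat • Pi.single k (1 : ℤ) : Fin n → ℤ) := by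
    funext l
    simp only [Pi.smul_apply, Pi.single_apply, smul_eq_mul, nsmul_eq_mul]
    split <;> simp [Int.toNat_of_nonneg hc]
  rw [this]
  exact AddSubmonoid.nsmul_mem S hS _

lemma mem_cone_zero (n : ℕ) (v : Fin n → ℤ) :
    v ∈ stdCone n 0 ↔ ∀ k, 0 ≤ v k := by
  rw [stdCone, if_pos rfl]
  constructor
  · intro hv
    induction hv using AddSubmonoid.closure_induction with
    | mem x hx => rcases hx with ⟨k, rfl⟩; intro l; by_cases h : l = k <;> simp [Pi.single_apply, h]
    | zero => intro l; simp
    | add x y hx hy ihx ihy => intro l; simpa using add_nonneg (ihx l) (ihy l)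
  · intro hv
    have hv' : v = ∑ k, Pi.single k (v k) := (Finset.univ_sum_single v).symm
    rw [hv']
    exact AddSubmonoid.sum_mem _ (fun k _ => single_mem n k (v k) (hv k) _
      (AddSubmonoid.subset_closure ⟨k, rfl⟩))

lemma mem_cone_succ (n : ℕ) (j : Fin n) (v : Fin n → ℤ) :
    v ∈ stdCone n j.succ ↔ (v j ≤ 0 ∧ ∀ k, v j ≤ v k) := by
  rw [stdCone, if_neg (Fin.succ_ne_zero j)]
  constructor
  · intro hv
    induction hv using AddSubmonoid.closure_induction with
    | mem x hx =>
      rcases hx with hx | ⟨k, hk, rfl⟩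
      · simp_all
      · have hkj : k ≠ j := by
          intro h; subst h; exact hk (by simp)
        constructor
        · simp [Pi.single_apply, hkj]
        · intro l; by_cases h : l = k <;> simp [Pi.single_apply, hkj, h]
    | zero => simp
    | add x y hx hy ihx ihy =>
      exact ⟨add_nonpos ihx.1 ihy.1, fun l => add_le_add (ihx.2 l) (ihy.2 l)⟩
  · rintro ⟨h0, hle⟩
    have hv' : v = (-(v j)).toNat • (fun _ => (-1 : ℤ)) + ∑ k, Pi.single k (v k - v j) := by
      funext l
      have h1 : ((∑ k, Pi.single k (v k - v j)) : Fin n → ℤ) l = v l - v j := by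
        rw [Finset.univ_sum_single (fun k => v k - v j)]
      have h2 : ((-(v j)).toNat : ℤ) = -(v j) := Int.toNat_of_nonneg (by linarith)
      simp only [Pi.add_apply, Pi.smul_apply, nsmul_eq_mul, Pi.mul_apply, Pi.natCast_apply, h1, h2]
      ring
    rw [hv']
    have hgen : (fun _ => (-1:ℤ)) ∈ ({fun _ => -1} ∪ {v | ∃ k : Fin n, (k : ℕ) + 1 ≠ ((j.succ : Fin (n+1)) : ℕ) ∧ v = Pi.single k 1} : Set (Fin n → ℤ)) :=
      Set.mem_union_left _ rfl
    refine AddSubmonoid.add_mem _ (AddSubmonoid.nsmul_mem _ (AddSubmonoid.subset_closure hgen) _) ?_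
    refine AddSubmonoid.sum_mem _ (fun k _ => ?_)
    by_cases h : k = j
    · subst h
      simp only [sub_self]
      rw [show (Pi.single k (0:ℤ) : Fin n → ℤ) = 0 from Pi.single_zero k]
      exact zero_mem _
    · refine single_mem n k _ (by linarith [hle k]) _ (AddSubmonoid.subset_closure ?_)
      have hk : (k : ℕ) + 1 ≠ ((j.succ : Fin (n+1)) : ℕ) := by
        simp only [Fin.val_succ]
        omega
      exact Or.inr ⟨k, hk, rfl⟩

lemma mem_cone_iff (n : ℕ) (i : Fin (n + 1)) (v : Fin n → ℤ) :
    v ∈ stdCone n i ↔ ∀ k, 0 ≤ psi n i v k := by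
  rcases Fin.eq_zero_or_eq_succ i with rfl | ⟨j, rfl⟩
  · rw [mem_cone_zero]; rfl
  · rw [mem_cone_succ]
    simp only [psi_succ]
    constructor
    · rintro ⟨h0, hle⟩ k
      by_cases h : k = j <;> simp [h] <;> [linarith; linarith [hle k]]
    · intro h
      have hj := h j
      rw [if_pos rfl] at hj
      refine ⟨by linarith, fun k => ?_⟩
      by_cases hk : k = j
      · simp [hk]
      · have := h k; simp only [if_neg hk] at this; linarith

lemma cone_cover (n : ℕ) (v : Fin n → ℤ) : ∃ i, v ∈ stdCone n i := by
  by_cases h : ∀ k, 0 ≤ v k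
  · exact ⟨0, (mem_cone_zero n v).2 h⟩
  · push_neg at h
    obtain ⟨k0, hk0⟩ := h
    obtain ⟨j, _, hj⟩ := Finset.exists_min_image Finset.univ v ⟨k0, Finset.mem_univ k0⟩
    refine ⟨j.succ, (mem_cone_succ n j v).2 ⟨?_, fun k => hj k (Finset.mem_univ k)⟩⟩
    linarith [hj k0 (Finset.mem_univ k0)]

lemma exists_coord (n : ℕ) (i k : Fin (n + 1)) (h : i ≠ k) :
    ∃ c : Fin n, ∀ v : Fin n → ℤ,
      (v ∈ stdCone n i ∧ v ∈ stdCone n k) ↔ ((∀ m, 0 ≤ psi n i v m) ∧ psi n i v c = 0) := by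
  rcases Fin.eq_zero_or_eq_succ i with rfl | ⟨j, rfl⟩
  · rcases Fin.eq_zero_or_eq_succ k with rfl | ⟨l, rfl⟩
    · exact absurd rfl h
    · refine ⟨l, fun v => ?_⟩
      rw [mem_cone_zero, mem_cone_succ, psi_zero]
      constructor
      · rintro ⟨h1, h2, h3⟩; exact ⟨h1, le_antisymm h2 (h1 l)⟩
      · rintro ⟨h1, h2⟩; exact ⟨h1, by rw [h2], fun m => h2 ▸ h1 m⟩
  · rcases Fin.eq_zero_or_eq_succ k with rfl | ⟨l, rfl⟩
    · refine ⟨j, fun v => ?_⟩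
      rw [mem_cone_succ, mem_cone_zero]
      simp only [psi_succ]
      constructor
      · rintro ⟨⟨h1, h2⟩, h3⟩
        have hj : v j = 0 := le_antisymm h1 (h3 j)
        refine ⟨fun m => ?_, by simp [hj]⟩
        by_cases hm : m = j
        · rw [if_pos hm, hj]; norm_num
        · simp only [if_neg hm]; linarith [h3 m]
      · rintro ⟨h1, h2⟩
        simp only [if_pos rfl, eq_self_iff_true, if_true, neg_eq_zero] at h2
        have hvj : v j = 0 := h2
        refine ⟨⟨by rw [hvj], fun m => ?_⟩, fun m => ?_⟩
        · by_cases hm : m = j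
          · simp [hm]
          · have := h1 m; simp only [if_neg hm] at this; linarith
        · by_cases hm : m = j
          · simp [hm, hvj]
          · have := h1 m; simp only [if_neg hm] at this; linarith
    · have hjl : j ≠ l := by
        intro hh; exact h (by rw [hh])
      refine ⟨l, fun v => ?_⟩
      rw [mem_cone_succ, mem_cone_succ]
      simp only [psi_succ]
      constructor
      · rintro ⟨⟨h1, h2⟩, h3, h4⟩
        have hlj : v l = v j := le_antisymm (h4 j) (h2 l)
        refine ⟨fun m => ?_, by rw [if_neg hjl.symm, hlj]; ring⟩
        by_cases hm : m = j
        · rw [if_pos hm]; linarith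
        · simp only [if_neg hm]; linarith [h2 m]
      · rintro ⟨h1, h2⟩
        rw [if_neg hjl.symm] at h2
        have hlj : v l = v j := by linarith
        have h1j := h1 j
        rw [if_pos rfl] at h1j
        refine ⟨⟨by linarith, fun m => ?_⟩, by rw [hlj]; linarith, fun m => ?_⟩
        · by_cases hm : m = j
          · simp [hm]
          · have := h1 m; simp only [if_neg hm] at this; linarith
        · by_cases hm : m = j
          · rw [hm]; linarith [hlj]
          · have := h1 m; simp only [if_neg hm] at this; linarith [hlj]


section LM
variable {n : ℕ} {K : Type} [Field K]
variable (lt : (Fin n → ℤ) → (Fin n → ℤ) → Prop)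
variable (hlt : IsStrictTotalOrder (Fin n → ℤ) lt)

include hlt

lemma finset_exists_max (S : Finset (Fin n → ℤ)) (hS : S.Nonempty) :
    ∃ m ∈ S, ∀ x ∈ S, x ≠ m → lt x m := by
  classical
  haveI := hlt
  induction S using Finset.induction_on with
  | empty => exact absurd hS (by simp)
  | @insert a S ha ih =>
    rcases S.eq_empty_or_nonempty with rfl | hS'
    · exact ⟨a, by simp, by simp⟩
    · obtain ⟨m, hmS, hm⟩ := ih hS'
      rcases trichotomous_of lt a m with hc | hc | hc
      · refine ⟨m, by simp [hmS], ?_⟩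
        intro x hx hxm
        rcases Finset.mem_insert.mp hx with rfl | hx
        · exact hc
        · exact hm x hx hxm
      · refine ⟨m, by simp [hmS], ?_⟩
        intro x hx hxm
        rcases Finset.mem_insert.mp hx with rfl | hx
        · exact absurd hc hxm
        · exact hm x hx hxm
      · refine ⟨a, by simp, ?_⟩
        intro x hx hxa
        rcases Finset.mem_insert.mp hx with rfl | hx
        · exact absurd rfl hxa
        · by_cases hxm : x = m
          · subst hxm; exact hc
          · exact trans_of lt (hm x hx hxm) hc


lemma lm_exists (f : (Fin n → ℤ) →₀ K) (hf : f ≠ 0) (t : Fin n → ℤ) :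
    ∃ m, LMof lt t f m := by
  classical
  have hne : (f.support.image (fun s => t + s)).Nonempty :=
    (Finsupp.support_nonempty_iff.mpr hf).image _
  obtain ⟨m, hmS, hm⟩ := finset_exists_max lt hlt _ hne
  obtain ⟨s, hs, rfl⟩ := Finset.mem_image.mp hmS
  refine ⟨t + s, ⟨⟨s, hs, rfl⟩, ?_⟩⟩
  intro s' hs' hne'
  exact hm _ (Finset.mem_image.mpr ⟨s', hs', rfl⟩) hne'

lemma lm_unique {f : (Fin n → ℤ) →₀ K} {t m m' : Fin n → ℤ}
    (h1 : LMof lt t f m) (h2 : LMof lt t f m') : m = m' := by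
  haveI := hlt
  by_contra hne
  obtain ⟨⟨s, hs, rfl⟩, hmax⟩ := h1
  obtain ⟨⟨s', hs', rfl⟩, hmax'⟩ := h2
  have l1 : lt (t + s) (t + s') := hmax' s hs hne
  have l2 : lt (t + s') (t + s) := hmax s' hs' (Ne.symm hne)
  exact absurd (trans_of lt l1 l2) (irrefl_of lt _)

end LM

lemma lm_shift {n : ℕ} {K : Type} [Field K]
    {lt : (Fin n → ℤ) → (Fin n → ℤ) → Prop}
    (hcompat : ∀ r : Fin n → ℤ, ∀ j, ∀ s ∈ stdCone n j, ∀ t ∈ stdCone n j,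
      lt r s → lt (r + t) (s + t))
    {f : (Fin n → ℤ) →₀ K} {t m : Fin n → ℤ} (i : Fin (n + 1))
    (hm : m ∈ stdCone n i) {u : Fin n → ℤ} (hu : u ∈ stdCone n i)
    (h : LMof lt t f m) : LMof lt (t + u) f (m + u) := by
  obtain ⟨⟨s, hs, rfl⟩, hmax⟩ := h
  constructor
  · exact ⟨s, hs, by ring⟩
  · intro s' hs' hne'
    have hne2 : t + s' ≠ t + s := by
      intro hh; apply hne'; rw [show t + u + s' = t + s' + u by ring, hh]
    have h3 := hcompat (t + s') i (t + s) hm u hu (hmax s' hs' hne2)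
    have e1 : t + u + s' = t + s' + u := by ring
    rw [e1]
    exact h3

lemma key_monogenous {n : ℕ} (Q : (Fin n → ℤ) → Prop)
    (hup : ∀ u w, Q u → u ≤ w → Q w)
    (hne : ∃ u, Q u)
    (hbd : ∃ B : ℤ, ∀ u, Q u → ∀ k, B ≤ u k)
    (hmin : ∀ p a b : Fin n → ℤ, ¬ Q p → Q a → Q b → p ≤ a → p ≤ b → p ≠ a → p ≠ b →
      (∀ k, p k = a k ∨ p k = b k) → False) :
    ∃ g, ∀ u, Q u ↔ g ≤ u := by
  obtain ⟨B, hB⟩ := hbd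
  -- every Q-element has a minimal Q-element below it
  have Hmin : ∀ u, Q u → ∃ g, Q g ∧ g ≤ u ∧ ∀ w, Q w → w ≤ g → w = g := by
    intro u hu
    set μ : (Fin n → ℤ) → ℕ := fun v => (∑ k, (v k - B)).toNat with hμ
    have hsum : ∀ v, Q v → ((∑ k, (v k - B)) : ℤ) = μ v := by
      intro v hv
      rw [hμ]
      exact (Int.toNat_of_nonneg (Finset.sum_nonneg fun k _ => by linarith [hB v hv k])).symm
    have H : ∀ N, ∀ u, Q u → μ u = N → ∃ g, Q g ∧ g ≤ u ∧ ∀ w, Q w → w ≤ g → w = g := by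
      intro N
      induction N using Nat.strong_induction_on with
      | _ N ih =>
        intro u hu hN
        by_cases hm : ∀ w, Q w → w ≤ u → w = u
        · exact ⟨u, hu, le_refl u, hm⟩
        · push_neg at hm
          obtain ⟨w, hw, hwu, hwne⟩ := hm
          have hlt : μ w < N := by
            obtain ⟨k0, hk0⟩ : ∃ k0, w k0 < u k0 := by
              by_contra hc
              push_neg at hc
              exact hwne (le_antisymm hwu (fun k => hc k))
            have : (∑ k, (w k - B)) < (∑ k, (u k - B)) :=
              Finset.sum_lt_sum (fun k _ => by linarith [hwu k]) ⟨k0, Finset.mem_univ _, by linarith⟩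
            have e1 := hsum w hw
            have e2 := hsum u hu
            omega
          obtain ⟨g, hg1, hg2, hg3⟩ := ih (μ w) hlt w hw rfl
          exact ⟨g, hg1, le_trans hg2 hwu, hg3⟩
    exact H (μ u) u hu rfl
  obtain ⟨u0, hu0⟩ := hne
  obtain ⟨g, hgQ, _, hgmin⟩ := Hmin u0 hu0
  refine ⟨g, fun u => ⟨fun hu => ?_, fun h => hup g u hgQ h⟩⟩
  obtain ⟨g2, hg2Q, hg2le, hg2min⟩ := Hmin u hu
  by_cases hgg : g = g2
  · exact hgg ▸ hg2le
  · exfalso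
    set p : Fin n → ℤ := fun k => min (g k) (g2 k) with hp
    have hpg : p ≤ g := fun k => min_le_left _ _
    have hpg2 : p ≤ g2 := fun k => min_le_right _ _
    have hQp : ¬ Q p := by
      intro hQp
      have hpg' : p = g := hgmin p hQp hpg
      have : g ≤ g2 := hpg' ▸ hpg2
      exact hgg (hg2min g hgQ this)
    have hpne1 : p ≠ g := fun hh => hQp (hh ▸ hgQ)
    have hpne2 : p ≠ g2 := fun hh => hQp (hh ▸ hg2Q)
    exact hmin p g g2 hQp hgQ hg2Q hpg hpg2 hpne1 hpne2 (fun k => min_choice (g k) (g2 k))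


/-- for a generalized monomial order on `ℤⁿ` whose underlying conic
decomposition is the standard one, for every nonzero Laurent polynomial `f` and every
`0 ≤ i ≤ n`, the set `T_i(f) = {t : lm(X^t f) ∈ T_i}` is a monogenous (cyclic)
`T_i`-module: `T_i(f) = g + T_i` for some `g ∈ ℤⁿ`. -/
theorem cone_lead_set_monogenous
    (n : ℕ) (K : Type) [Field K]
    (lt : (Fin n → ℤ) → (Fin n → ℤ) → Prop)
    (hlt : IsStrictTotalOrder (Fin n → ℤ) lt)
    (hzero : ∀ v : Fin n → ℤ, v = 0 ∨ lt 0 v)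
    (hcompat : ∀ r : Fin n → ℤ, ∀ j, ∀ s ∈ stdCone n j, ∀ t ∈ stdCone n j,
      lt r s → lt (r + t) (s + t))
    (f : (Fin n → ℤ) →₀ K) (hf : f ≠ 0) :
    ∀ i : Fin (n + 1), ∃ g₀ : Fin n → ℤ,
      {t : Fin n → ℤ | ∃ m, LMof lt t f m ∧ m ∈ stdCone n i} =
        {t : Fin n → ℤ | ∃ s ∈ stdCone n i, t = g₀ + s} := by
  intro i
  classical
  set Q : (Fin n → ℤ) → Prop := fun u => ∃ m, LMof lt (psi n i u) f m ∧ m ∈ stdCone n i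
    with hQdef
  -- upward closedness
  have hup : ∀ u w, Q u → u ≤ w → Q w := by
    intro u w ⟨m, hm, hmT⟩ huw
    have hs : psi n i (w - u) ∈ stdCone n i := by
      rw [mem_cone_iff]
      intro k
      rw [psi_psi]
      simpa using huw k
    refine ⟨m + psi n i (w - u), ?_, AddSubmonoid.add_mem _ hmT hs⟩
    have := lm_shift hcompat i hmT hs hm
    rwa [← psi_add, show u + (w - u) = w by ring] at this
  -- nonemptiness
  have hne : ∃ u, Q u := by
    set C : ℕ := f.support.sup (fun s => Finset.univ.sup (fun k => (-(psi n i s k)).toNat))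
      with hC
    refine ⟨fun _ => (C : ℤ), ?_⟩
    obtain ⟨m, hm⟩ := lm_exists lt hlt f hf (psi n i (fun _ => (C : ℤ)))
    refine ⟨m, hm, ?_⟩
    obtain ⟨⟨s, hs, rfl⟩, -⟩ := hm
    rw [mem_cone_iff]
    intro k
    rw [psi_add, psi_psi]
    have h1 : (-(psi n i s k)).toNat ≤ C :=
      le_trans (Finset.le_sup (f := fun k => (-(psi n i s k)).toNat) (Finset.mem_univ k))
        (Finset.le_sup (f := fun s => Finset.univ.sup fun k => (-(psi n i s k)).toNat) hs)
    have h2 : -(psi n i s k) ≤ ((-(psi n i s k)).toNat : ℤ) := Int.self_le_toNat _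
    have h3 : ((-(psi n i s k)).toNat : ℤ) ≤ (C : ℤ) := Int.ofNat_le.mpr h1
    simp only [Pi.add_apply]
    linarith
  -- bounded below
  have hbd : ∃ B : ℤ, ∀ u, Q u → ∀ k, B ≤ u k := by
    set C : ℕ := f.support.sup (fun s => Finset.univ.sup (fun k => (psi n i s k).toNat))
      with hC
    refine ⟨-(C : ℤ), ?_⟩
    rintro u ⟨m, ⟨⟨s, hs, rfl⟩, -⟩, hmT⟩ k
    rw [mem_cone_iff] at hmT
    have := hmT k
    rw [psi_add, psi_psi] at this
    have h1 : (psi n i s k).toNat ≤ C :=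
      le_trans (Finset.le_sup (f := fun k => (psi n i s k).toNat) (Finset.mem_univ k))
        (Finset.le_sup (f := fun s => Finset.univ.sup fun k => (psi n i s k).toNat) hs)
    have h2 : psi n i s k ≤ ((psi n i s k).toNat : ℤ) := Int.self_le_toNat _
    have h3 : ((psi n i s k).toNat : ℤ) ≤ (C : ℤ) := Int.ofNat_le.mpr h1
    simp only [Pi.add_apply] at this
    linarith
  -- the minimality condition
  have hmin : ∀ p a b : Fin n → ℤ, ¬ Q p → Q a → Q b → p ≤ a → p ≤ b → p ≠ a → p ≠ b →
      (∀ k, p k = a k ∨ p k = b k) → False := by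
    intro p a b hQp hQa hQb hpa hpb _ _ hk
    obtain ⟨m, hm⟩ := lm_exists lt hlt f hf (psi n i p)
    have hmTi : m ∉ stdCone n i := fun hc => hQp ⟨m, hm, hc⟩
    obtain ⟨k', hk'⟩ := cone_cover n m
    have hki : i ≠ k' := by rintro rfl; exact hmTi hk'
    obtain ⟨c, hc⟩ := exists_coord n i k' hki
    obtain ⟨c', hc'⟩ := exists_coord n k' i (Ne.symm hki)
    -- main sub-argument
    have main : ∀ x, Q x → p ≤ x → x c = p c → False := by
      intro x hQx hpx hxc
      set u : Fin n → ℤ := psi n i (x - p) with hu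
      have huT : u ∈ stdCone n i ∧ u ∈ stdCone n k' := by
        rw [hc u]
        constructor
        · intro l; rw [hu, psi_psi]; simpa using hpx l
        · rw [hu, psi_psi]; simp only [Pi.sub_apply]; omega
      obtain ⟨m', hm', hm'T⟩ := hQx
      have hshift := lm_shift hcompat k' hk' huT.2 hm
      rw [← psi_add, show p + (x - p) = x by ring] at hshift
      have hmu : m' = m + u := lm_unique lt hlt hm' hshift
      have hmuT : (m + u) ∈ stdCone n k' ∧ (m + u) ∈ stdCone n i :=
        ⟨AddSubmonoid.add_mem _ hk' huT.2, hmu ▸ hm'T⟩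
      have h1 := (hc' (m + u)).1 hmuT
      have h2 := (hc' u).1 ⟨huT.2, huT.1⟩
      have h3 : psi n k' m c' = 0 := by
        have := congrFun (psi_add n k' m u) c'
        simp only [Pi.add_apply] at this
        rw [this] at h1
        omega
      have h4 : ∀ l, 0 ≤ psi n k' m l := (mem_cone_iff n k' m).1 hk'
      exact hmTi ((hc' m).2 ⟨h4, h3⟩).2
    rcases hk c with h | h
    · exact main a hQa hpa h.symm
    · exact main b hQb hpb h.symm
  obtain ⟨g, hg⟩ := key_monogenous Q hup hne hbd hmin
  refine ⟨psi n i g, ?_⟩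
  ext t
  simp only [Set.mem_setOf_eq]
  constructor
  · intro ht
    have hQt : Q (psi n i t) := by
      rw [hQdef]
      simpa [psi_psi] using ht
    have hgle : g ≤ psi n i t := (hg _).1 hQt
    refine ⟨t - psi n i g, ?_, by ring⟩
    rw [mem_cone_iff]
    intro k
    have : psi n i (psi n i g + (t - psi n i g)) = g + psi n i (t - psi n i g) := by
      rw [psi_add, psi_psi]
    rw [show psi n i g + (t - psi n i g) = t by ring] at this
    have h5 := congrFun this k
    simp only [Pi.add_apply] at h5
    have h6 : g k ≤ psi n i t k := hgle k
    linarith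
  · rintro ⟨s, hsT, rfl⟩
    have hQ : Q (psi n i (psi n i g + s)) := by
      apply (hg _).2
      intro k
      rw [psi_add, psi_psi]
      simp only [Pi.add_apply]
      have := (mem_cone_iff n i s).1 hsT k
      linarith
    obtain ⟨m, hm, hmT⟩ := hQ
    rw [psi_psi] at hm
    exact ⟨m, hm, hmT⟩
end
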